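/- arXiv:1405.1492 — 9 statements merged into one kernel-verified Lean document; each statement's English description precedes it below -/
import Mathlib

section
/- Let A be an n×n integer matrix with det A = ±1 whose characteristic polynomial p_A is irreducible over ℚ, let λ be a root of p_A, and let F = ℚ(λ) be the resulting number field with ring of integers 𝓞_F. Then the centralizer C(A) = {B ∈ GL(n,ℤ) : AB = BA} is isomorphic, as a group, to a finite-index subgroup of the unit group 𝓞_F^×; that is, there is an injective group homomorphism from C(A) into 𝓞_F^× whose image has finite index in 𝓞_F^×. -/
/-!
The matrix `A` makes `ℚⁿ` a one-dimensional `F`-vector space (via `λ ↦ A`), so every rational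
matrix commuting with `A` is multiplication by an element of `F`; this embeds `F` into
`Mₙ(ℚ)` with image the commutant of `A`. An integer matrix commuting with `A` then comes from
an integral element of `F`, which gives an injective homomorphism `C(A) → 𝓞_F^×`. Conversely,
if `m` clears the denominators of the images of a `ℤ`-basis of `𝓞_F`, every unit congruent to
`1` modulo `m` is hit, and these units have finite index because `𝓞_F / m𝓞_F` is finite.
-/

open Matrix Polynomial NumberField Module

section Commutant

variable {k K : Type*} [Field k] [Field K] [Algebra k K] [FiniteDimensional k K]

theorem AlgHom.exists_apply_eq_of_forall_commute {V : Type*} [AddCommGroup V] [Module k V]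
    (f : K →ₐ[k] Module.End k V) (hdim : finrank k K = finrank k V) {T : Module.End k V}
    (hT : ∀ c, Commute T (f c)) : ∃ c, f c = T := by
  let _ : Module K V := Module.compHom V f.toRingHom
  have : IsScalarTower k K V := ⟨fun a c v => by
    change f (a • c) v = a • f c v
    rw [map_smul, LinearMap.smul_apply]⟩
  have hrank : finrank K V = 1 := by
    have h := finrank_mul_finrank k K V
    rw [← hdim] at h
    exact Nat.eq_of_mul_eq_mul_left finrank_pos (h.trans (mul_one _).symm)
  let T' : V →ₗ[K] V :=
    { toFun := T
      map_add' := T.map_add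
      map_smul' := fun c v => congrArg (· v) (hT c).eq }
  obtain ⟨c, hc, -⟩ := T'.existsUnique_eq_smul_id_of_finrank_eq_one hrank
  exact ⟨c, LinearMap.ext fun v => (LinearMap.congr_fun hc v).symm⟩

variable {ι : Type*} [Fintype ι] [DecidableEq ι]

theorem AlgHom.exists_apply_eq_of_commute_of_adjoin_eq_top (f : K →ₐ[k] Matrix ι ι k)
    (hdim : finrank k K = Fintype.card ι) {x : K} (hx : Algebra.adjoin k {x} = ⊤)
    {B : Matrix ι ι k} (hB : Commute B (f x)) : ∃ c, f c = B := by
  have hcomm (c : K) : Commute B (f c) := by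
    refine Algebra.commute_of_mem_adjoin_singleton_of_commute (R := k) ?_ hB
    rw [← AlgHom.map_adjoin_singleton, hx]
    exact ⟨c, trivial, rfl⟩
  let e : Matrix ι ι k ≃ₐ[k] Module.End k (ι → k) := Matrix.toLinAlgEquiv'
  obtain ⟨c, hc⟩ := (e.toAlgHom.comp f).exists_apply_eq_of_forall_commute
    (by rw [hdim, Module.finrank_fintype_fun_eq_card]) (T := e B) fun c => (hcomm c).map e
  exact ⟨c, e.injective hc⟩

theorem exists_injective_algHom_matrix_of_minpoly_eq_charpoly {x : K}
    (hx : Algebra.adjoin k {x} = ⊤) {M : Matrix ι ι k} (hmin : minpoly k x = M.charpoly) :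
    ∃ f : K →ₐ[k] Matrix ι ι k, Function.Injective f ∧ ∀ B, Commute B M → ∃ c, f c = B := by
  let pb := PowerBasis.ofAdjoinEqTop (Algebra.IsIntegral.isIntegral x) hx
  have hgen : pb.gen = x := PowerBasis.ofAdjoinEqTop_gen _ hx
  have hdim : finrank k K = Fintype.card ι := by
    rw [pb.finrank, PowerBasis.ofAdjoinEqTop_dim, hmin, charpoly_natDegree_eq_dim]
  let f : K →ₐ[k] Matrix ι ι k := pb.lift M (by rw [hgen, hmin, aeval_self_charpoly])
  have hfx : f x = M := hgen ▸ pb.lift_gen _ _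
  have : Nonempty ι := Fintype.card_pos_iff.mp (hdim ▸ finrank_pos)
  exact ⟨f, f.toRingHom.injective, fun B hB =>
    f.exists_apply_eq_of_commute_of_adjoin_eq_top hdim hx (hfx ▸ hB)⟩

end Commutant

theorem Submonoid.mem_centralizer_singleton_iff {M : Type*} [Monoid M] {a b : M} :
    b ∈ Submonoid.centralizer {a} ↔ Commute b a :=
  Submonoid.mem_centralizer_iff.trans
    ⟨fun h => (h a rfl).symm, fun h _ hg => Set.mem_singleton_iff.mp hg ▸ h.symm⟩

theorem Subgroup.centralizer_singleton_eq_units {M : Type*} [Monoid M] (a : Mˣ) :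
    Subgroup.centralizer {a} = (Submonoid.centralizer {(a : M)}).units := by
  ext u
  simp only [Subgroup.mem_centralizer_singleton_iff, Submonoid.mem_units_iff,
    Submonoid.mem_centralizer_singleton_iff, Units.ext_iff, Units.val_mul]
  exact ⟨fun h => ⟨h, Commute.units_inv_left h⟩, fun h => h.1⟩

def Subgroup.centralizerSingletonEquivUnits {M : Type*} [Monoid M] (a : Mˣ) :
    Subgroup.centralizer {a} ≃* (Submonoid.centralizer {(a : M)})ˣ :=
  (MulEquiv.subgroupCongr (Subgroup.centralizer_singleton_eq_units a)).trans
    (Submonoid.unitsEquivUnitsType _)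

theorem Units.finiteIndex_range_map {S R : Type*} [Monoid S] [CommRing R] {κ : S →* R}
    (hκ : Function.Injective κ) (I : Ideal R) [Finite (R ⧸ I)]
    (hI : ∀ x, Ideal.Quotient.mk I x = 1 → x ∈ Set.range κ) :
    (Units.map κ).range.FiniteIndex := by
  let ρ : Rˣ →* (R ⧸ I)ˣ := Units.map (Ideal.Quotient.mk I).toMonoidHom
  suffices ρ.ker ≤ (Units.map κ).range from Subgroup.finiteIndex_of_le this
  intro u hu
  have hu' : ρ u⁻¹ = 1 := by rw [map_inv, hu, inv_one]
  obtain ⟨s, hs⟩ := hI u (congrArg Units.val hu)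
  obtain ⟨t, ht⟩ := hI ↑u⁻¹ (congrArg Units.val hu')
  refine ⟨⟨s, t, hκ ?_, hκ ?_⟩, Units.ext hs⟩ <;> simp [hs, ht]

section IntegerMatrices

variable {ι : Type*} [Fintype ι] [DecidableEq ι]

theorem mapMatrix_intCast_injective :
    Function.Injective ((Int.castRingHom ℚ).mapMatrix : Matrix ι ι ℤ →+* Matrix ι ι ℚ) :=
  Matrix.map_injective Int.cast_injective

theorem isIntegral_of_algHom_apply_eq_mapMatrix {K : Type*} [Ring K] [Algebra ℚ K]
    {f : K →ₐ[ℚ] Matrix ι ι ℚ} (hf : Function.Injective f) {c : K} {B : Matrix ι ι ℤ}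
    (h : f c = (Int.castRingHom ℚ).mapMatrix B) : IsIntegral ℤ c := by
  refine (isIntegral_algHom_iff (f.restrictScalars ℤ) hf).mp ?_
  rw [AlgHom.restrictScalars_apply, h]
  exact (Algebra.IsIntegral.isIntegral (R := ℤ) B).map (Int.castRingHom ℚ).mapMatrix.toIntAlgHom

theorem exists_int_smul_mem_range_mapMatrix {M : Type*} [AddCommGroup M] [Module.Finite ℤ M]
    (L : M →ₗ[ℤ] Matrix ι ι ℚ) :
    ∃ m : ℤ, m ≠ 0 ∧ ∀ x, m • L x ∈ (Int.castRingHom ℚ).mapMatrix.range := by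
  obtain ⟨r, s, hs⟩ := Module.Finite.exists_fin (R := ℤ) (M := M)
  obtain ⟨⟨m, hm⟩, hint⟩ := IsLocalization.exist_integer_multiples_of_finite
    (nonZeroDivisors ℤ) fun t : Fin r × ι × ι => L (s t.1) t.2.1 t.2.2
  refine ⟨m, nonZeroDivisors.ne_zero hm, fun x => ?_⟩
  let N : Submodule ℤ M :=
    (Int.castRingHom ℚ).mapMatrix.range.toAddSubgroup.toIntSubmodule.comap (m • L)
  suffices ⊤ ≤ N from this Submodule.mem_top
  rw [← hs, Submodule.span_le]
  rintro _ ⟨i, rfl⟩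
  choose D hD using fun a b => hint (i, a, b)
  exact ⟨Matrix.of D, by ext a b; exact hD a b⟩

variable {K : Type*} [Field K] [NumberField K] {f : K →ₐ[ℚ] Matrix ι ι ℚ}
  (hf : Function.Injective f) {A : Matrix ι ι ℤ}
  (hcomm : ∀ B, Commute B ((Int.castRingHom ℚ).mapMatrix A) → ∃ c, f c = B)

noncomputable def centralizerToField : Submonoid.centralizer {A} →* K :=
  ((AlgEquiv.ofInjective f hf).symm : f.range →* K).comp <|
    ((Int.castRingHom ℚ).mapMatrix.toMonoidHom.comp (Submonoid.centralizer {A}).subtype).codRestrict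
      f.range fun z => f.mem_range.mpr <|
        hcomm _ ((Submonoid.mem_centralizer_singleton_iff.mp z.2).map (Int.castRingHom ℚ).mapMatrix)

theorem algHom_centralizerToField (z : Submonoid.centralizer {A}) :
    f (centralizerToField hf hcomm z) = (Int.castRingHom ℚ).mapMatrix z :=
  congrArg Subtype.val ((AlgEquiv.ofInjective f hf).apply_symm_apply _)

noncomputable def centralizerToRingOfIntegers : Submonoid.centralizer {A} →* 𝓞 K :=
  RingOfIntegers.restrict_monoidHom (centralizerToField hf hcomm) fun z =>
    isIntegral_of_algHom_apply_eq_mapMatrix hf (algHom_centralizerToField hf hcomm z)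

theorem algHom_centralizerToRingOfIntegers (z : Submonoid.centralizer {A}) :
    f (centralizerToRingOfIntegers hf hcomm z) = (Int.castRingHom ℚ).mapMatrix z :=
  algHom_centralizerToField hf hcomm z

theorem centralizerToRingOfIntegers_injective :
    Function.Injective (centralizerToRingOfIntegers hf hcomm) := fun y z h => by
  have := congrArg (fun x : 𝓞 K => f x) h
  simp only [algHom_centralizerToRingOfIntegers] at this
  exact Subtype.ext (mapMatrix_intCast_injective this)

theorem mem_range_centralizerToRingOfIntegers {x : 𝓞 K}
    (hx : f x ∈ (Int.castRingHom ℚ).mapMatrix.range) :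
    x ∈ Set.range (centralizerToRingOfIntegers hf hcomm) := by
  obtain ⟨D, hD⟩ := hx
  obtain ⟨a, ha⟩ := hcomm _ (Commute.refl _)
  have hDA : D ∈ Submonoid.centralizer {A} := by
    have h : Commute ((Int.castRingHom ℚ).mapMatrix D) ((Int.castRingHom ℚ).mapMatrix A) := by
      rw [← ha, hD]
      exact (Commute.all (x : K) a).map f
    refine Submonoid.mem_centralizer_singleton_iff.mpr (mapMatrix_intCast_injective ?_)
    rw [map_mul, map_mul]
    exact h.eq
  refine ⟨⟨D, hDA⟩, RingOfIntegers.ext (hf ?_)⟩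
  rw [algHom_centralizerToRingOfIntegers]
  exact hD

theorem finiteIndex_range_units_map_centralizerToRingOfIntegers :
    (Units.map (centralizerToRingOfIntegers hf hcomm)).range.FiniteIndex := by
  obtain ⟨m, hm, hmf⟩ := exists_int_smul_mem_range_mapMatrix
    ((f.restrictScalars ℤ).comp (IsScalarTower.toAlgHom ℤ (𝓞 K) K)).toLinearMap
  have : Finite (𝓞 K ⧸ Ideal.span {(m : 𝓞 K)}) :=
    Ideal.finiteQuotientOfFreeOfNeBot _ (by simpa using hm)
  refine Units.finiteIndex_range_map (centralizerToRingOfIntegers_injective hf hcomm)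
    (Ideal.span {(m : 𝓞 K)}) fun x hx => mem_range_centralizerToRingOfIntegers hf hcomm ?_
  obtain ⟨a, ha⟩ := Ideal.mem_span_singleton'.mp (Ideal.Quotient.eq.mp (hx.trans (map_one _).symm))
  have hfx : f x = 1 + m • f a := by
    rw [← sub_add_cancel x 1, ← ha]
    simp [zsmul_eq_mul, add_comm, mul_comm]
  rw [hfx]
  exact add_mem (one_mem _) (hmf a)

end IntegerMatrices

theorem centralizer_iso_finite_index_subgroup_of_units_general (n : ℕ)
    (A : Matrix (Fin n) (Fin n) ℤ) (hA : IsUnit A)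
    (hirr : Irreducible (A.charpoly.map (Int.castRingHom ℚ)))
    (K : Type) [Field K] [NumberField K] (lam : K)
    (hroot : Polynomial.aeval lam A.charpoly = 0)
    (hgen : IntermediateField.adjoin ℚ {lam} = ⊤) :
    ∃ φ : Subgroup.centralizer {hA.unit} →* (𝓞 K)ˣ,
      Function.Injective φ ∧ φ.range.FiniteIndex := by
  have hmin : minpoly ℚ lam = ((Int.castRingHom ℚ).mapMatrix A).charpoly := by
    rw [RingHom.mapMatrix_apply, charpoly_map]
    refine (minpoly.eq_of_irreducible_of_monic hirr ?_ ((charpoly_monic A).map _)).symm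
    rwa [← algebraMap_int_eq, aeval_map_algebraMap]
  obtain ⟨f, hf, hcomm⟩ := exists_injective_algHom_matrix_of_minpoly_eq_charpoly
    (IntermediateField.adjoin_eq_top_iff.mp hgen) hmin
  rw [← hA.unit_spec] at hcomm
  let κ := centralizerToRingOfIntegers hf hcomm
  refine ⟨(Units.map κ).comp (Subgroup.centralizerSingletonEquivUnits hA.unit : _ →* _),
    (Units.map_injective (centralizerToRingOfIntegers_injective hf hcomm)).comp
      (MulEquiv.injective _), ?_⟩
  rw [MonoidHom.range_comp, MulEquiv.range_eq_top, ← MonoidHom.range_eq_map]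
  exact finiteIndex_range_units_map_centralizerToRingOfIntegers hf hcomm

/-- **Baake–Roberts.** If `A ∈ GL(n, ℤ)` has irreducible characteristic polynomial over `ℚ`,
`λ` is a root of it generating the number field `F = ℚ(λ)`, then the centralizer
`C(A) = {B ∈ GL(n, ℤ) : AB = BA}` is isomorphic to a finite-index subgroup of the unit
group `𝓞_F^×`: there is an injective group homomorphism from `C(A)` into `𝓞_F^×` whose
range has finite index. (Here `GL(n, ℤ)` is realized as the unit group of the ring of
`n × n` integer matrices, so membership is exactly `det = ±1`, and `hA.unit` is `A` as
such a unit.) -/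
theorem centralizer_iso_finite_index_subgroup_of_units (n : ℕ)
    (A : Matrix (Fin n) (Fin n) ℤ) (hA : IsUnit A)
    (hdet : A.det = 1 ∨ A.det = -1)
    (hirr : Irreducible (A.charpoly.map (Int.castRingHom ℚ)))
    (K : Type) [Field K] [NumberField K] (lam : K)
    (hroot : Polynomial.aeval lam A.charpoly = 0)
    (hgen : IntermediateField.adjoin ℚ {lam} = ⊤) :
    ∃ φ : Subgroup.centralizer {hA.unit} →* (𝓞 K)ˣ,
      Function.Injective φ ∧ φ.range.FiniteIndex :=
  centralizer_iso_finite_index_subgroup_of_units_general n A hA hirr K lam hroot hgen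
end

section
/- Let A be an n×n integer matrix whose characteristic polynomial p_A is irreducible over ℚ, and let λ ∈ ℂ be a root of p_A. If v is a polynomial with rational coefficients such that the matrix v(A) has all integer entries, then v(λ) is an algebraic integer; if moreover v(A) has determinant ±1, then v(λ) is a unit in the ring of algebraic integers, i.e., both v(λ) and v(λ)⁻¹ are algebraic integers. -/
open Matrix Polynomial

/-!
Over `ℂ`, a root `λ` of `p_A` is an eigenvalue of `A`, so by the spectral mapping theorem `v(λ)`
is an eigenvalue of `v(A)`. When `v(A) = C` is an integer matrix, `v(λ)` is therefore a root of
the monic integer polynomial `p_C`. If moreover `det C = ±1`, then `C⁻¹` is an integer matrix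
too, and `v(λ)⁻¹` is one of its eigenvalues.
-/

namespace Matrix

variable {ι : Type*} [Fintype ι] [DecidableEq ι]
variable {R K : Type*} [CommRing R] [Field K] [Algebra R K]

theorem isIntegral_of_mem_spectrum_map (M : Matrix ι ι R) {μ : K}
    (hμ : μ ∈ spectrum K (M.map (algebraMap R K))) : IsIntegral R μ := by
  refine ⟨M.charpoly, M.charpoly_monic, ?_⟩
  rwa [mem_spectrum_iff_isRoot_charpoly, charpoly_map, IsRoot.def, eval_map] at hμ

theorem isIntegral_inv_of_mem_spectrum_map {M : Matrix ι ι R} (hM : IsUnit M) {μ : K}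
    (hμ : μ ∈ spectrum K (M.map (algebraMap R K))) : IsIntegral R μ⁻¹ := by
  let u := Units.map (algebraMap R K).mapMatrix.toMonoidHom hM.unit
  have hinv : μ⁻¹ ∈ spectrum K (↑u⁻¹ : Matrix ι ι K) := by
    rw [← spectrum.map_inv]
    exact Set.inv_mem_inv.mpr hμ
  exact isIntegral_of_mem_spectrum_map (↑hM.unit⁻¹ : Matrix ι ι R) hinv

theorem aeval_mem_spectrum_map_aeval_of_isRoot_charpoly {F : Type*} [Field F] [Algebra F K]
    (A : Matrix ι ι F) (p : F[X]) {lam : K}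
    (hlam : IsRoot (A.map (algebraMap F K)).charpoly lam) :
    aeval lam p ∈ spectrum K ((aeval A p).map (algebraMap F K)) := by
  have hmap : (aeval A p).map (algebraMap F K) =
      aeval (A.map (algebraMap F K)) (p.map (algebraMap F K)) := by
    rw [aeval_map_algebraMap]
    exact (aeval_algHom_apply (Algebra.ofId F K).mapMatrix A p).symm
  rw [hmap, ← eval_map_algebraMap p lam]
  exact spectrum.subset_polynomial_aeval _ _
    ⟨lam, mem_spectrum_iff_isRoot_charpoly.mpr hlam, rfl⟩

end Matrix

theorem aeval_root_integral_of_integer_matrix_general (n : ℕ)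
    (A : Matrix (Fin n) (Fin n) ℤ)
    (lam : ℂ) (hroot : Polynomial.aeval lam A.charpoly = 0)
    (v : Polynomial ℚ)
    (hint : ∀ i j, ∃ m : ℤ, (Polynomial.aeval (A.map (Int.cast : ℤ → ℚ)) v) i j = m) :
    IsIntegral ℤ (Polynomial.aeval lam v) ∧
      (((Polynomial.aeval (A.map (Int.cast : ℤ → ℚ)) v).det = 1 ∨
        (Polynomial.aeval (A.map (Int.cast : ℤ → ℚ)) v).det = -1) →
        IsIntegral ℤ (Polynomial.aeval lam v)⁻¹) := by
  choose C hC using hint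
  have hB : aeval (A.map (Int.cast : ℤ → ℚ)) v = (of C).map (Int.cast : ℤ → ℚ) := by
    ext i j
    exact hC i j
  have hlam : IsRoot ((A.map (Int.cast : ℤ → ℚ)).map (algebraMap ℚ ℂ)).charpoly lam := by
    rwa [Matrix.map_map, show algebraMap ℚ ℂ ∘ Int.cast = algebraMap ℤ ℂ by ext; simp,
      charpoly_map, IsRoot.def, eval_map, ← aeval_def]
  have hspec : aeval lam v ∈ spectrum ℂ ((of C).map (algebraMap ℤ ℂ)) := by
    simpa [hB, Matrix.map_map] using aeval_mem_spectrum_map_aeval_of_isRoot_charpoly _ v hlam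
  refine ⟨isIntegral_of_mem_spectrum_map _ hspec,
    fun hdet ↦ isIntegral_inv_of_mem_spectrum_map ?_ hspec⟩
  rw [hB, ← Int.cast_det] at hdet
  rw [isUnit_iff_isUnit_det, Int.isUnit_iff]
  exact_mod_cast hdet

/-- Let `A` be an integer matrix with irreducible characteristic polynomial over `ℚ` and let
`λ ∈ ℂ` be a root of it. If `v ∈ ℚ[X]` is such that `v(A)` has integer entries, then `v(λ)`
is an algebraic integer; if moreover `det v(A) = ±1`, then `v(λ)⁻¹` is an algebraic integer
as well, i.e. `v(λ)` is a unit in the ring of algebraic integers. -/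
theorem aeval_root_integral_of_integer_matrix (n : ℕ)
    (A : Matrix (Fin n) (Fin n) ℤ)
    (hirr : Irreducible (A.charpoly.map (Int.castRingHom ℚ)))
    (lam : ℂ) (hroot : Polynomial.aeval lam A.charpoly = 0)
    (v : Polynomial ℚ)
    (hint : ∀ i j, ∃ m : ℤ, (Polynomial.aeval (A.map (Int.cast : ℤ → ℚ)) v) i j = m) :
    IsIntegral ℤ (Polynomial.aeval lam v) ∧
      (((Polynomial.aeval (A.map (Int.cast : ℤ → ℚ)) v).det = 1 ∨
        (Polynomial.aeval (A.map (Int.cast : ℤ → ℚ)) v).det = -1) →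
        IsIntegral ℤ (Polynomial.aeval lam v)⁻¹) :=
  aeval_root_integral_of_integer_matrix_general n A lam hroot v hint
end

section
/- Let A be an n×n integer matrix whose characteristic polynomial p_A is irreducible over ℚ, and let λ ∈ ℂ be a root of p_A. If v and w are polynomials with integer coefficients such that v(λ)·w(λ) = 1, then the integer matrix v(A) has determinant ±1 and commutes with A; that is, v(A) ∈ C(A). -/
open Matrix Polynomial

/-
Since `p_A` is monic and irreducible over `ℚ`, it is the minimal polynomial of `λ`, so
`v(λ)w(λ) = 1` gives `p_A ∣ vw - 1` over `ℚ`, hence over `ℤ` by monicity. Cayley–Hamilton then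
yields `v(A)w(A) = 1`, so `det v(A)` is a unit of `ℤ`; and `v(A)` commutes with `A` as a polynomial
in `A`.
-/

theorem Polynomial.dvd_of_aeval_eq_zero_of_irreducible_map {K : Type*} [Field K] [Algebra ℚ K]
    {p f : ℤ[X]} (hp : p.Monic) (hirr : Irreducible (p.map (Int.castRingHom ℚ))) {x : K}
    (hpx : aeval x p = 0) (hfx : aeval x f = 0) : p ∣ f := by
  have hmap : ∀ g : ℤ[X], aeval x (g.map (Int.castRingHom ℚ)) = aeval x g := fun g =>
    aeval_map_algebraMap ℚ x g
  have hmin : minpoly ℚ x = p.map (Int.castRingHom ℚ) :=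
    (minpoly.eq_of_irreducible_of_monic hirr (by rw [hmap, hpx]) (hp.map _)).symm
  refine (map_dvd_map (Int.castRingHom ℚ) Int.cast_injective hp).mp ?_
  exact hmin ▸ minpoly.dvd ℚ x (by rw [hmap, hfx])

theorem Matrix.aeval_mul_aeval_eq_one_of_charpoly_root {n : Type*} [Fintype n] [DecidableEq n]
    {K : Type*} [Field K] [Algebra ℚ K] {A : Matrix n n ℤ}
    (hirr : Irreducible (A.charpoly.map (Int.castRingHom ℚ))) {x : K}
    (hroot : aeval x A.charpoly = 0) {v w : ℤ[X]} (hvw : aeval x v * aeval x w = 1) :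
    aeval A v * aeval A w = 1 := by
  have hdvd : A.charpoly ∣ v * w - 1 :=
    dvd_of_aeval_eq_zero_of_irreducible_map A.charpoly_monic hirr hroot (by simp [hvw])
  have hzero := aeval_eq_zero_of_dvd_aeval_eq_zero hdvd A.aeval_self_charpoly
  rwa [map_sub, map_mul, map_one, sub_eq_zero] at hzero

/-- Let `A` be an integer matrix with irreducible characteristic polynomial over `ℚ` and let
`λ ∈ ℂ` be a root of it. If `v, w ∈ ℤ[X]` satisfy `v(λ)·w(λ) = 1`, then the integer matrix
`v(A)` has determinant `±1` and commutes with `A`, i.e. `v(A) ∈ C(A)`. -/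
theorem aeval_matrix_mem_centralizer_of_unit_value (n : ℕ)
    (A : Matrix (Fin n) (Fin n) ℤ)
    (hirr : Irreducible (A.charpoly.map (Int.castRingHom ℚ)))
    (lam : ℂ) (hroot : Polynomial.aeval lam A.charpoly = 0)
    (v w : Polynomial ℤ)
    (hunit : Polynomial.aeval lam v * Polynomial.aeval lam w = 1) :
    ((Polynomial.aeval A v).det = 1 ∨ (Polynomial.aeval A v).det = -1) ∧
      A * Polynomial.aeval A v = Polynomial.aeval A v * A := by
  have hvw := aeval_mul_aeval_eq_one_of_charpoly_root hirr hroot hunit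
  refine ⟨Int.isUnit_iff.mp (isUnit_det_of_right_inverse hvw), ?_⟩
  simpa only [aeval_X] using ((Commute.all X v).map (aeval A)).eq
end

section
/- Let A be an n×n integer matrix with det A = ±1 whose characteristic polynomial p_A is irreducible over ℚ, let λ be a root of p_A, F = ℚ(λ), and 𝓞_F the ring of integers of F. Assume ℤ[λ]^× = 𝓞_F^×, i.e., every unit u of 𝓞_F satisfies u ∈ ℤ[λ] and u⁻¹ ∈ ℤ[λ]. Then γ(C(A)) = 𝓞_F^×; precisely: (i) for every B ∈ GL(n,ℤ) with AB = BA there is a polynomial v ∈ ℚ[X] with v(A) = B and v(λ) ∈ 𝓞_F^×, and (ii) for every unit u ∈ 𝓞_F^× there are B ∈ GL(n,ℤ) with AB = BA and a polynomial v ∈ ℤ[X] with v(A) = B and v(λ) = u. -/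
open Matrix Polynomial NumberField

/-!
As `A` and `λ` are roots of the same irreducible polynomial `p` over `ℚ`, a rational polynomial
vanishes at `A` iff it vanishes at `λ` (both statements say `p ∣ v`), so `v(A) ↦ v(λ)` is
well defined and multiplicative. Irreducibility of `p_A` also makes every nonzero vector cyclic
for `A`, hence every rational matrix commuting with `A` is a polynomial in `A`. If `v(A)` is an
integer matrix it is integral over `ℤ` by Cayley–Hamilton, and so is `v(λ)`; applied to `B` and
`B⁻¹` this makes `v(λ)` a unit of `𝓞_F`. Conversely, a unit `u = w(λ)` with `u⁻¹ = w'(λ)` and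
`w, w' ∈ ℤ[X]` gives `w(A) w'(A) = 1`.
-/

section Irreducible

variable {K A B : Type*} [Field K] [Ring A] [Algebra K A] [Ring B] [Algebra K B]
  {p q : K[X]} {a : A}

theorem Polynomial.isUnit_aeval_of_irreducible_of_not_dvd (hp : Irreducible p)
    (ha : aeval a p = 0) (hpq : ¬p ∣ q) : IsUnit (aeval a q) := by
  obtain ⟨s, t, hst⟩ := hp.coprime_iff_not_dvd.2 hpq
  have hinv : aeval a t * aeval a q = 1 := by
    simpa [ha] using congrArg (aeval a) hst
  exact ⟨⟨aeval a q, aeval a t, ((Commute.all q t).map (aeval a)).eq.trans hinv, hinv⟩, rfl⟩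

theorem Polynomial.dvd_of_irreducible_of_aeval_eq_zero [Nontrivial A] (hp : Irreducible p)
    (ha : aeval a p = 0) (hq : aeval a q = 0) : p ∣ q :=
  by_contra fun hpq => not_isUnit_zero (hq ▸ isUnit_aeval_of_irreducible_of_not_dvd hp ha hpq)

theorem Polynomial.aeval_eq_zero_of_irreducible_of_aeval_eq_zero [Nontrivial A] {b : B}
    (hp : Irreducible p) (ha : aeval a p = 0) (hb : aeval b p = 0) (hq : aeval a q = 0) :
    aeval b q = 0 := by
  obtain ⟨r, rfl⟩ := dvd_of_irreducible_of_aeval_eq_zero hp ha hq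
  rw [map_mul, hb, zero_mul]

theorem IsIntegral.aeval_of_irreducible {R : Type*} [CommRing R] [Algebra R K] [Algebra R A]
    [Algebra R B] [IsScalarTower R K A] [IsScalarTower R K B] [Nontrivial A] {b : B}
    (hp : Irreducible p) (ha : aeval a p = 0) (hb : aeval b p = 0)
    (hq : IsIntegral R (aeval a q)) : IsIntegral R (aeval b q) := by
  obtain ⟨f, hf_monic, hf⟩ := hq
  refine ⟨f, hf_monic, ?_⟩
  have hcomp := aeval_eq_zero_of_irreducible_of_aeval_eq_zero
    (q := (f.map (algebraMap R K)).comp q) hp ha hb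
    (by rwa [aeval_comp, aeval_map_algebraMap, aeval_def])
  rwa [aeval_comp, aeval_map_algebraMap, aeval_def] at hcomp

end Irreducible

theorem Polynomial.aeval_map_intCastRingHom {R A : Type*} [CommRing R] [Ring A] [Algebra R A]
    (x : A) (p : ℤ[X]) : aeval x (p.map (Int.castRingHom R)) = aeval x p := by
  rw [← algebraMap_int_eq, aeval_map_algebraMap]

namespace Matrix

variable {n : Type*} [Fintype n] [DecidableEq n]

theorem nonempty_of_irreducible_charpoly {R : Type*} [CommRing R] {A : Matrix n n R}
    (hA : Irreducible A.charpoly) : Nonempty n := by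
  by_contra h
  rw [not_nonempty_iff] at h
  exact hA.not_isUnit (by rw [charpoly_isEmpty]; exact isUnit_one)

theorem exists_aeval_mulVec_eq_of_irreducible {K : Type*} [Field K] {A : Matrix n n K}
    (hA : Irreducible A.charpoly) {x : n → K} (hx : x ≠ 0) (y : n → K) :
    ∃ q : K[X], aeval A q *ᵥ x = y := by
  let φ : degreeLT K (Fintype.card n) →ₗ[K] n → K :=
    { toFun q := aeval A (q : K[X]) *ᵥ x
      map_add' q r := by simp [add_mulVec]
      map_smul' c q := by simp [smul_mulVec] }
  have hφ : Function.Injective φ := by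
    rw [← LinearMap.ker_eq_bot, LinearMap.ker_eq_bot']
    rintro ⟨q, hq_deg⟩ hq
    by_contra hq0
    have hq0 : q ≠ 0 := fun h => hq0 (Subtype.ext h)
    have hndvd : ¬A.charpoly ∣ q := fun hdvd => by
      have := degree_le_of_dvd hdvd hq0
      rw [charpoly_degree_eq_dim] at this
      exact (mem_degreeLT.1 hq_deg).not_ge this
    have hinj := mulVec_injective_iff_isUnit.2
      (isUnit_aeval_of_irreducible_of_not_dvd hA (aeval_self_charpoly A) hndvd)
    exact hx (hinj (hq.trans (mulVec_zero _).symm))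
  have hrank : Module.finrank K (degreeLT K (Fintype.card n)) = Module.finrank K (n → K) := by
    simp [(degreeLTEquiv K _).finrank_eq]
  obtain ⟨⟨q, _⟩, hq⟩ := (LinearMap.injective_iff_surjective_of_finrank_eq_finrank hrank).1 hφ y
  exact ⟨q, hq⟩

theorem exists_aeval_eq_of_commute_of_cyclic {R : Type*} [CommRing R] {A M : Matrix n n R}
    {x : n → R} (hx : ∀ y, ∃ q : R[X], aeval A q *ᵥ x = y) (hM : Commute A M) :
    ∃ v : R[X], aeval A v = M := by
  obtain ⟨v, hv⟩ := hx (M *ᵥ x)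
  refine ⟨v, ext_iff_mulVec.2 fun y => ?_⟩
  obtain ⟨q, rfl⟩ := hx y
  have hMq : Commute M (aeval A q) :=
    Algebra.commute_of_mem_adjoin_singleton_of_commute (aeval_mem_adjoin_singleton R A) hM.symm
  have hvq : Commute (aeval A v) (aeval A q) := (Commute.all v q).map (aeval A)
  rw [mulVec_mulVec, hvq.eq, ← mulVec_mulVec, hv, mulVec_mulVec, ← hMq.eq, mulVec_mulVec]

theorem exists_aeval_eq_of_commute_of_irreducible {K : Type*} [Field K] {A M : Matrix n n K}
    (hA : Irreducible A.charpoly) (hM : Commute A M) : ∃ v : K[X], aeval A v = M := by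
  have := nonempty_of_irreducible_charpoly hA
  obtain ⟨x, hx⟩ := exists_ne (0 : n → K)
  exact exists_aeval_eq_of_commute_of_cyclic (exists_aeval_mulVec_eq_of_irreducible hA hx) hM

theorem aeval_map_intCast_map {R : Type*} [CommRing R] (A : Matrix n n ℤ) (q : ℤ[X]) :
    aeval (A.map (Int.cast : ℤ → R)) (q.map (Int.castRingHom R)) = (aeval A q).map Int.cast := by
  rw [aeval_map_intCastRingHom]
  change _ = (Int.castRingHom R).mapMatrix.toIntAlgHom (aeval A q)
  rw [← aeval_algHom_apply]
  -- the two `ℤ`-algebra structures on `Matrix n n R` agree only definitionally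
  rfl

theorem charpoly_map_intCast (A : Matrix n n ℤ) :
    (A.map (Int.cast : ℤ → ℚ)).charpoly = A.charpoly.map (Int.castRingHom ℚ) :=
  A.charpoly_map (Int.castRingHom ℚ)

theorem aeval_map_intCast_charpoly_map (A : Matrix n n ℤ) :
    aeval (A.map (Int.cast : ℤ → ℚ)) (A.charpoly.map (Int.castRingHom ℚ)) = 0 :=
  A.charpoly_map_intCast ▸ aeval_self_charpoly _

variable {K : Type*} [Field K] [CharZero K] {A : Matrix n n ℤ} {lam : K}

theorem exists_aeval_eq_map_intCast_and_isIntegral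
    (hirr : Irreducible (A.charpoly.map (Int.castRingHom ℚ))) (hroot : aeval lam A.charpoly = 0)
    {C : Matrix n n ℤ} (hC : Commute A C) :
    ∃ v : ℚ[X], aeval (A.map (Int.cast : ℤ → ℚ)) v = C.map Int.cast ∧
      IsIntegral ℤ (aeval lam v) := by
  have hAq : Irreducible (A.map (Int.cast : ℤ → ℚ)).charpoly := A.charpoly_map_intCast ▸ hirr
  have := nonempty_of_irreducible_charpoly hAq
  obtain ⟨v, hv⟩ := exists_aeval_eq_of_commute_of_irreducible hAq
    (hC.map (Int.castRingHom ℚ).mapMatrix)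
  refine ⟨v, hv, IsIntegral.aeval_of_irreducible hirr (aeval_map_intCast_charpoly_map A)
    (by rwa [aeval_map_intCastRingHom]) ?_⟩
  rw [hv]
  exact C.isIntegral.map (Int.castRingHom ℚ).mapMatrix.toIntAlgHom

theorem exists_aeval_eq_map_intCast_and_aeval_eq_unit
    (hirr : Irreducible (A.charpoly.map (Int.castRingHom ℚ))) (hroot : aeval lam A.charpoly = 0)
    {B : Matrix n n ℤ} (hB : IsUnit B) (hAB : Commute A B) :
    ∃ v : ℚ[X], aeval (A.map (Int.cast : ℤ → ℚ)) v = B.map Int.cast ∧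
      ∃ u : (𝓞 K)ˣ, algebraMap (𝓞 K) K u = aeval lam v := by
  have := nonempty_of_irreducible_charpoly (A.charpoly_map_intCast ▸ hirr)
  obtain ⟨U, rfl⟩ := hB
  obtain ⟨v, hv, hv_int⟩ := exists_aeval_eq_map_intCast_and_isIntegral hirr hroot hAB
  obtain ⟨w, hw, hw_int⟩ :=
    exists_aeval_eq_map_intCast_and_isIntegral hirr hroot hAB.units_inv_right
  have hvw : aeval lam (v * w - 1) = 0 := by
    refine aeval_eq_zero_of_irreducible_of_aeval_eq_zero hirr (aeval_map_intCast_charpoly_map A)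
      (by rwa [aeval_map_intCastRingHom]) ?_
    rw [map_sub, map_mul, hv, hw, map_one, sub_eq_zero]
    exact (map_mul (Int.castRingHom ℚ).mapMatrix _ _).symm.trans (by rw [U.mul_inv, map_one])
  rw [map_sub, map_mul, map_one, sub_eq_zero] at hvw
  obtain ⟨u, hu⟩ :=
    IsUnit.of_mul_eq_one (a := (⟨_, hv_int⟩ : 𝓞 K)) ⟨_, hw_int⟩ (RingOfIntegers.ext hvw)
  exact ⟨v, hv, u, congrArg (algebraMap (𝓞 K) K) hu⟩

theorem aeval_mul_aeval_eq_one
    (hirr : Irreducible (A.charpoly.map (Int.castRingHom ℚ))) (hroot : aeval lam A.charpoly = 0)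
    {w w' : ℤ[X]} (h : aeval lam w * aeval lam w' = 1) : aeval A w * aeval A w' = 1 := by
  have hq := aeval_eq_zero_of_irreducible_of_aeval_eq_zero (a := lam) hirr
    (by rwa [aeval_map_intCastRingHom])
    (aeval_map_intCast_charpoly_map A) (q := (w * w' - 1).map (Int.castRingHom ℚ))
    (by rw [aeval_map_intCastRingHom, map_sub, map_mul, h, map_one, sub_self])
  rw [aeval_map_intCast_map] at hq
  have h0 : aeval A (w * w' - 1) = 0 :=
    Matrix.map_injective Int.cast_injective (hq.trans (Matrix.map_zero _ Int.cast_zero).symm)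
  rwa [map_sub, map_mul, map_one, sub_eq_zero] at h0

end Matrix

theorem gamma_centralizer_eq_units_general (n : ℕ)
    (A : Matrix (Fin n) (Fin n) ℤ)
    (hirr : Irreducible (A.charpoly.map (Int.castRingHom ℚ)))
    (K : Type) [Field K] [NumberField K] (lam : K)
    (hroot : Polynomial.aeval lam A.charpoly = 0)
    (hZl : ∀ u : (𝓞 K)ˣ, (algebraMap (𝓞 K) K (u : 𝓞 K) ∈ Algebra.adjoin ℤ ({lam} : Set K))
      ∧ (algebraMap (𝓞 K) K ((u⁻¹ : (𝓞 K)ˣ) : 𝓞 K) ∈ Algebra.adjoin ℤ ({lam} : Set K))) :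
    (∀ B : Matrix (Fin n) (Fin n) ℤ, (B.det = 1 ∨ B.det = -1) → A * B = B * A →
      ∃ v : Polynomial ℚ,
        Polynomial.aeval (A.map (Int.cast : ℤ → ℚ)) v = B.map (Int.cast : ℤ → ℚ) ∧
        ∃ u : (𝓞 K)ˣ, algebraMap (𝓞 K) K (u : 𝓞 K) = Polynomial.aeval lam v) ∧
    (∀ u : (𝓞 K)ˣ, ∃ (B : Matrix (Fin n) (Fin n) ℤ) (v : Polynomial ℤ),
      (B.det = 1 ∨ B.det = -1) ∧ A * B = B * A ∧
      Polynomial.aeval A v = B ∧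
      Polynomial.aeval lam v = algebraMap (𝓞 K) K (u : 𝓞 K)) := by
  refine ⟨fun B hB hAB => ?_, fun u => ?_⟩
  · exact exists_aeval_eq_map_intCast_and_aeval_eq_unit hirr hroot
      ((isUnit_iff_isUnit_det B).2 (Int.isUnit_iff.2 hB)) hAB
  · simp only [Algebra.adjoin_singleton_eq_range_aeval, AlgHom.mem_range] at hZl
    obtain ⟨⟨w, hw⟩, ⟨w', hw'⟩⟩ := hZl u
    have hww' : aeval A w * aeval A w' = 1 := aeval_mul_aeval_eq_one hirr hroot
      (by rw [hw, hw', ← map_mul, u.mul_inv, map_one])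
    have hdet : IsUnit (aeval A w).det := IsUnit.of_mul_eq_one _ (by rw [← det_mul, hww', det_one])
    exact ⟨aeval A w, w, Int.isUnit_iff.1 hdet,
      Algebra.commute_of_mem_adjoin_self (aeval_mem_adjoin_singleton ℤ A), rfl, hw⟩

/-- Let `A ∈ GL(n, ℤ)` have irreducible characteristic polynomial over `ℚ` with root `λ`
generating the number field `F = ℚ(λ)`. If `ℤ[λ]^× = 𝓞_F^×` (every unit of `𝓞_F` lies,
together with its inverse, in `ℤ[λ] = Algebra.adjoin ℤ {λ}`), then `γ(C(A)) = 𝓞_F^×`: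
(i) every `B ∈ GL(n, ℤ)` commuting with `A` is `v(A)` for some `v ∈ ℚ[X]` with `v(λ)` a
unit of `𝓞_F`, and (ii) every unit `u ∈ 𝓞_F^×` arises as `v(λ)` for some `v ∈ ℤ[X]` with
`B = v(A) ∈ GL(n, ℤ)` commuting with `A`. -/
theorem gamma_centralizer_eq_units (n : ℕ)
    (A : Matrix (Fin n) (Fin n) ℤ) (hdet : A.det = 1 ∨ A.det = -1)
    (hirr : Irreducible (A.charpoly.map (Int.castRingHom ℚ)))
    (K : Type) [Field K] [NumberField K] (lam : K)
    (hroot : Polynomial.aeval lam A.charpoly = 0)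
    (hgen : IntermediateField.adjoin ℚ {lam} = ⊤)
    (hZl : ∀ u : (𝓞 K)ˣ, (algebraMap (𝓞 K) K (u : 𝓞 K) ∈ Algebra.adjoin ℤ ({lam} : Set K))
      ∧ (algebraMap (𝓞 K) K ((u⁻¹ : (𝓞 K)ˣ) : 𝓞 K) ∈ Algebra.adjoin ℤ ({lam} : Set K))) :
    (∀ B : Matrix (Fin n) (Fin n) ℤ, (B.det = 1 ∨ B.det = -1) → A * B = B * A →
      ∃ v : Polynomial ℚ,
        Polynomial.aeval (A.map (Int.cast : ℤ → ℚ)) v = B.map (Int.cast : ℤ → ℚ) ∧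
        ∃ u : (𝓞 K)ˣ, algebraMap (𝓞 K) K (u : 𝓞 K) = Polynomial.aeval lam v) ∧
    (∀ u : (𝓞 K)ˣ, ∃ (B : Matrix (Fin n) (Fin n) ℤ) (v : Polynomial ℤ),
      (B.det = 1 ∨ B.det = -1) ∧ A * B = B * A ∧
      Polynomial.aeval A v = B ∧
      Polynomial.aeval lam v = algebraMap (𝓞 K) K (u : 𝓞 K)) :=
  gamma_centralizer_eq_units_general n A hirr K lam hroot hZl
end

section
/- Let A be an n×n integer matrix with det A = ±1 whose characteristic polynomial p_A is irreducible over ℚ, let λ be a root of p_A, F = ℚ(λ), and 𝓞_F the ring of integers of F. Assume: (i) every unit u of 𝓞_F satisfies u ∈ ℤ[λ] and u⁻¹ ∈ ℤ[λ] (i.e., ℤ[λ]^× = 𝓞_F^×); and (ii) λ is a fundamental unit, i.e., the unit group 𝓞_F^× is generated by λ together with its torsion subgroup (the roots of unity in F). Then there exists J ∈ GL(n,ℤ) with AJ = JA and of finite even order 2k satisfying J^k = −I, such that every B ∈ GL(n,ℤ) with AB = BA can be written B = A^m · J^l for some integer m and some integer l with 0 ≤ l < 2k; that is, C(A) = ⟨A⟩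 × ⟨J⟩. -/
open Matrix Polynomial NumberField

/-!
The assignment `λ ↦ A` extends to a `ℚ`-algebra embedding `ψ : F → Mₙ(ℚ)` because `p_A` is
the minimal polynomial of `λ`. It makes `ℚⁿ` a one-dimensional `F`-vector space, so a matrix
commuting with `A`, hence with `ψ(F)`, is `F`-linear, i.e. equal to `ψ(u)` for some `u ∈ F`.
If the matrix has integer entries, `u` is a root of its characteristic polynomial, hence
integral: `C(A)` embeds into `𝓞_F^×`, with `A ↦ λ`. Conversely `ψ` maps `ℤ[λ]` to integer
matrices, so by (i) a generator `ζ` of the torsion of `𝓞_F^×` (cyclic of even order `2k`,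
with `ζ^k = -1`) gives `J`, and by (ii) every unit is `λ^m ζ^l`.
-/

section FieldToMatrices

variable {k K : Type*} [Field k] [Field K] [Algebra k K] {ι : Type*} [Fintype ι] [DecidableEq ι]
  {M : Matrix ι ι k} {lam : K}

theorem Matrix.nonempty_of_irreducible_charpoly_s10 {R : Type*} [CommRing R] {M : Matrix ι ι R}
    (h : Irreducible M.charpoly) : Nonempty ι := by
  by_contra! hι
  exact not_irreducible_one (charpoly_isEmpty (A := M) ▸ h)

theorem minpoly_eq_charpoly_of_irreducible (hirr : Irreducible M.charpoly)
    (hroot : aeval lam M.charpoly = 0) : minpoly k lam = M.charpoly :=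
  (minpoly.eq_of_irreducible_of_monic hirr hroot M.charpoly_monic).symm

theorem isIntegral_of_aeval_charpoly_eq_zero (hroot : aeval lam M.charpoly = 0) :
    IsIntegral k lam :=
  ⟨M.charpoly, M.charpoly_monic, hroot⟩

theorem exists_algHom_apply_eq_of_irreducible_charpoly (hirr : Irreducible M.charpoly)
    (hroot : aeval lam M.charpoly = 0) (hgen : IntermediateField.adjoin k {lam} = ⊤) :
    ∃ ψ : K →ₐ[k] Matrix ι ι k, ψ lam = M := by
  have hint := isIntegral_of_aeval_charpoly_eq_zero hroot
  let pb := PowerBasis.ofAdjoinEqTop hint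
    (Algebra.adjoin_eq_top_of_primitive_element hint.isAlgebraic hgen)
  refine ⟨pb.lift M ?_, pb.lift_gen M _⟩
  rw [PowerBasis.ofAdjoinEqTop_gen, minpoly_eq_charpoly_of_irreducible hirr hroot]
  exact aeval_self_charpoly M

theorem finrank_eq_card_of_irreducible_charpoly (hirr : Irreducible M.charpoly)
    (hroot : aeval lam M.charpoly = 0) (hgen : IntermediateField.adjoin k {lam} = ⊤) :
    Module.finrank k K = Fintype.card ι := by
  have hint := isIntegral_of_aeval_charpoly_eq_zero hroot
  rw [(PowerBasis.ofAdjoinEqTop hint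
    (Algebra.adjoin_eq_top_of_primitive_element hint.isAlgebraic hgen)).finrank,
    PowerBasis.ofAdjoinEqTop_dim, minpoly_eq_charpoly_of_irreducible hirr hroot,
    charpoly_natDegree_eq_dim]

theorem AlgHom.commute_of_commute_of_adjoin_eq_top {R A B : Type*} [CommSemiring R] [Semiring A]
    [Semiring B] [Algebra R A] [Algebra R B] (ψ : A →ₐ[R] B) {a : A}
    (hgen : Algebra.adjoin R {a} = ⊤) {b : B} (hb : Commute (ψ a) b) (x : A) :
    Commute (ψ x) b := by
  have hle : Algebra.adjoin R {a} ≤ (Subalgebra.centralizer R {b}).comap ψ :=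
    Algebra.adjoin_le <| Set.singleton_subset_iff.2 <|
      (Subalgebra.mem_centralizer_iff R).2 fun _ hg => hg ▸ hb.eq.symm
  exact ((Subalgebra.mem_centralizer_iff R).1 (hle (hgen ▸ Algebra.mem_top)) b rfl).symm

theorem exists_algHom_apply_eq_of_forall_commute [FiniteDimensional k K] {V : Type*}
    [AddCommGroup V] [Module k V] (ψ : K →ₐ[k] Module.End k V)
    (hrank : Module.finrank k V = Module.finrank k K) {f : Module.End k V}
    (hf : ∀ x, Commute (ψ x) f) : ∃ u, ψ u = f := by
  let _ : Module K V := Module.compHom V ψ.toRingHom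
  have : IsScalarTower k K V := ⟨fun q x v => by
    show ψ (q • x) v = q • ψ x v
    rw [map_smul, LinearMap.smul_apply]⟩
  have hpos : 0 < Module.finrank k K := Module.finrank_pos
  have : Module.Finite k V := Module.finite_of_finrank_pos (hrank ▸ hpos)
  have : Module.Finite K V := Module.Finite.of_restrictScalars_finite k K V
  have hrank1 : Module.finrank K V = 1 := by
    have := Module.finrank_mul_finrank k K V
    rw [hrank] at this
    exact (Nat.mul_eq_left hpos.ne').mp this
  let fK : V →ₗ[K] V :=
    { f with
      map_smul' := fun x v => by
        show f (ψ x v) = ψ x (f v)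
        rw [← Module.End.mul_apply, ← (hf x).eq, Module.End.mul_apply] }
  obtain ⟨c, hc, -⟩ := fK.existsUnique_eq_smul_id_of_finrank_eq_one hrank1
  exact ⟨c, LinearMap.ext fun v => (congrArg (· v) hc).symm⟩

theorem exists_algHom_apply_eq_of_commute (hirr : Irreducible M.charpoly)
    (hroot : aeval lam M.charpoly = 0) (hgen : IntermediateField.adjoin k {lam} = ⊤)
    (ψ : K →ₐ[k] Matrix ι ι k) (hψ : ψ lam = M) {B : Matrix ι ι k} (hB : Commute M B) :
    ∃ u, ψ u = B := by
  have hint := isIntegral_of_aeval_charpoly_eq_zero hroot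
  have hadj := Algebra.adjoin_eq_top_of_primitive_element hint.isAlgebraic hgen
  have : FiniteDimensional k K := (PowerBasis.ofAdjoinEqTop hint hadj).finite
  let e := (Matrix.toLinAlgEquiv' (R := k) (n := ι)).toAlgHom
  obtain ⟨u, hu⟩ := exists_algHom_apply_eq_of_forall_commute (e.comp ψ)
    (by rw [finrank_eq_card_of_irreducible_charpoly hirr hroot hgen,
      Module.finrank_fintype_fun_eq_card])
    (f := e B) fun x => (ψ.commute_of_commute_of_adjoin_eq_top hadj (hψ ▸ hB) x).map e
  exact ⟨u, Matrix.toLinAlgEquiv'.injective hu⟩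

end FieldToMatrices

section IntegerMatrices

variable {ι : Type*} [Fintype ι] [DecidableEq ι] {K : Type*} [Field K] [CharZero K]
  {A : Matrix ι ι ℤ} {lam : K}

local notation "castℚ" => RingHom.mapMatrix (Int.castRingHom ℚ)

theorem charpoly_mapMatrix_intCast (A : Matrix ι ι ℤ) :
    (castℚ A).charpoly = A.charpoly.map (Int.castRingHom ℚ) :=
  charpoly_map A _

theorem aeval_charpoly_mapMatrix_intCast (A : Matrix ι ι ℤ) (x : K) :
    aeval x (castℚ A).charpoly = aeval x A.charpoly := by
  rw [charpoly_mapMatrix_intCast, ← algebraMap_int_eq, aeval_map_algebraMap]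

theorem exists_algHom_apply_eq_mapMatrix (hirr : Irreducible (A.charpoly.map (Int.castRingHom ℚ)))
    (hroot : aeval lam A.charpoly = 0) (hgen : IntermediateField.adjoin ℚ {lam} = ⊤) :
    ∃ ψ : K →ₐ[ℚ] Matrix ι ι ℚ, ψ lam = castℚ A := by
  rw [← charpoly_mapMatrix_intCast] at hirr
  rw [← aeval_charpoly_mapMatrix_intCast] at hroot
  exact exists_algHom_apply_eq_of_irreducible_charpoly hirr hroot hgen

variable (ψ : K →ₐ[ℚ] Matrix ι ι ℚ)

theorem isIntegral_of_algHom_apply_eq_mapMatrix_s10 [Nonempty ι] {x : K} {C : Matrix ι ι ℤ}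
    (hx : ψ x = castℚ C) : IsIntegral ℤ x := by
  have : IsIntegral ℤ (castℚ C) :=
    (Matrix.isIntegral C).map (castℚ : Matrix ι ι ℤ →+* _).toIntAlgHom
  rw [← hx] at this
  exact (isIntegral_algHom_iff ψ.toRingHom.toIntAlgHom ψ.toRingHom.injective).mp this

theorem exists_mapMatrix_eq_of_mem_adjoin (hψ : ψ lam = castℚ A) {x : K}
    (hx : x ∈ Algebra.adjoin ℤ {lam}) : ∃ C, castℚ C = ψ x :=
  Algebra.adjoin_le
    (S := (castℚ : Matrix ι ι ℤ →+* _).toIntAlgHom.range.comap ψ.toRingHom.toIntAlgHom)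
    (Set.singleton_subset_iff.2 ⟨A, by exact hψ.symm⟩) hx

theorem exists_units_algHom_apply_eq_of_commute
    (hirr : Irreducible (A.charpoly.map (Int.castRingHom ℚ)))
    (hroot : aeval lam A.charpoly = 0) (hgen : IntermediateField.adjoin ℚ {lam} = ⊤)
    (hψ : ψ lam = castℚ A) {B : (Matrix ι ι ℤ)ˣ} (hB : Commute A B) :
    ∃ u : (𝓞 K)ˣ, ψ u = castℚ B := by
  rw [← charpoly_mapMatrix_intCast] at hirr
  rw [← aeval_charpoly_mapMatrix_intCast] at hroot
  have := nonempty_of_irreducible_charpoly_s10 hirr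
  have hrange (C : Matrix ι ι ℤ) (hC : Commute A C) : ∃ x : 𝓞 K, ψ x = castℚ C := by
    obtain ⟨x, hx⟩ := exists_algHom_apply_eq_of_commute hirr hroot hgen ψ hψ (hC.map castℚ)
    exact ⟨⟨x, isIntegral_of_algHom_apply_eq_mapMatrix_s10 ψ hx⟩, hx⟩
  obtain ⟨x, hx⟩ := hrange B hB
  obtain ⟨y, hy⟩ := hrange ↑B⁻¹ hB.units_inv_right
  have hxy : x * y = 1 := RingOfIntegers.coe_injective <| ψ.toRingHom.injective <| by
    have := congrArg castℚ B.mul_inv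
    rw [map_mul, ← hx, ← hy, ← map_mul, map_one] at this
    simpa using this
  exact ⟨Units.mkOfMulEqOne x y hxy, hx⟩

theorem exists_units_mapMatrix_eq_of_mem_adjoin (hψ : ψ lam = castℚ A) {u : (𝓞 K)ˣ}
    (hu : algebraMap (𝓞 K) K u ∈ Algebra.adjoin ℤ {lam})
    (hu' : algebraMap (𝓞 K) K ↑u⁻¹ ∈ Algebra.adjoin ℤ {lam}) :
    ∃ J : (Matrix ι ι ℤ)ˣ, castℚ J = ψ u := by
  have hinj : Function.Injective (castℚ : Matrix ι ι ℤ →+* Matrix ι ι ℚ) :=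
    Matrix.map_injective Int.cast_injective
  obtain ⟨C, hC⟩ := exists_mapMatrix_eq_of_mem_adjoin ψ hψ hu
  obtain ⟨C', hC'⟩ := exists_mapMatrix_eq_of_mem_adjoin ψ hψ hu'
  refine ⟨⟨C, C', hinj ?_, hinj ?_⟩, hC⟩
  · rw [map_mul, map_one, hC, hC', ← map_mul, ← map_mul, u.mul_inv, map_one, map_one]
  · rw [map_mul, map_one, hC, hC', ← map_mul, ← map_mul, u.inv_mul, map_one, map_one]

end IntegerMatrices

namespace NumberField.Units

theorem exists_generator_torsion (K : Type*) [Field K] [NumberField K] :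
    ∃ (ζ : (𝓞 K)ˣ) (k : ℕ), 0 < k ∧ orderOf ζ = 2 * k ∧ ζ ^ k = -1 ∧
      ∀ z : (𝓞 K)ˣ, IsOfFinOrder z → ∃ l < 2 * k, ζ ^ l = z := by
  obtain ⟨g, hg⟩ := IsCyclic.exists_generator (α := torsion K)
  obtain ⟨k, hk⟩ := even_torsionOrder K
  have hk0 : 0 < k := by have := torsionOrder_pos K; omega
  have hord : orderOf (g : (𝓞 K)ˣ) = 2 * k := by
    rw [Subgroup.orderOf_coe, orderOf_eq_card_of_forall_mem_zpowers hg, ← torsionOrder, hk,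
      two_mul]
  refine ⟨g, k, hk0, hord, ?_, fun z hz => ?_⟩
  · have := (IsPrimitiveRoot.orderOf (g : (𝓞 K)ˣ)).pow_of_dvd hk0.ne'
      (hord ▸ dvd_mul_left k 2)
    rw [hord, Nat.mul_div_cancel _ hk0] at this
    exact Units.ext (IsPrimitiveRoot.coe_units_iff.2 this).eq_neg_one_of_two_right
  · obtain ⟨j, hj⟩ := Subgroup.mem_zpowers_iff.1 (hg ⟨z, (CommGroup.mem_torsion _).2 hz⟩)
    have : z ∈ Subgroup.zpowers (g : (𝓞 K)ˣ) := ⟨j, congrArg Subtype.val hj⟩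
    classical
    rw [(orderOf_pos_iff.mp (hord ▸ by omega)).mem_zpowers_iff_mem_range_orderOf, hord,
      Finset.mem_image] at this
    simpa using this

theorem exists_eq_zpow_mul_pow {K : Type*} [Field K] {ε ζ : (𝓞 K)ˣ} {N : ℕ}
    (hfund : ∀ u : (𝓞 K)ˣ, ∃ (m : ℤ) (z : (𝓞 K)ˣ),
      IsOfFinOrder z ∧ (u : K) = z * (ε : K) ^ m)
    (hζ : ∀ z : (𝓞 K)ˣ, IsOfFinOrder z → ∃ l < N, ζ ^ l = z) (u : (𝓞 K)ˣ) :
    ∃ m : ℤ, ∃ l < N, u = ε ^ m * ζ ^ l := by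
  obtain ⟨m, z, hz, huz⟩ := hfund u
  obtain ⟨l, hl, rfl⟩ := hζ z hz
  refine ⟨m, l, hl, coe_injective K ?_⟩
  change (u : K) = ((ε ^ m * ζ ^ l : (𝓞 K)ˣ) : K)
  rw [coe_mul, coe_zpow, mul_comm]
  exact huz

end NumberField.Units

theorem centralizer_eq_powers_mul_finite_cyclic_general (n : ℕ)
    (A : Matrix (Fin n) (Fin n) ℤ) (hA : IsUnit A)
    (hirr : Irreducible (A.charpoly.map (Int.castRingHom ℚ)))
    (K : Type) [Field K] [NumberField K] (lam : K)
    (hroot : Polynomial.aeval lam A.charpoly = 0)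
    (hgen : IntermediateField.adjoin ℚ {lam} = ⊤)
    (hZl : ∀ u : (𝓞 K)ˣ, (algebraMap (𝓞 K) K (u : 𝓞 K) ∈ Algebra.adjoin ℤ ({lam} : Set K))
      ∧ (algebraMap (𝓞 K) K ((u⁻¹ : (𝓞 K)ˣ) : 𝓞 K) ∈ Algebra.adjoin ℤ ({lam} : Set K)))
    (hfund : ∀ u : (𝓞 K)ˣ, ∃ (m : ℤ) (z : (𝓞 K)ˣ), IsOfFinOrder z ∧
      algebraMap (𝓞 K) K (u : 𝓞 K) = algebraMap (𝓞 K) K (z : 𝓞 K) * lam ^ m) :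
    ∃ (J : (Matrix (Fin n) (Fin n) ℤ)ˣ) (k : ℕ), 0 < k ∧
      A * (J : Matrix (Fin n) (Fin n) ℤ) = (J : Matrix (Fin n) (Fin n) ℤ) * A ∧
      orderOf J = 2 * k ∧ J ^ k = -1 ∧
      ∀ B : (Matrix (Fin n) (Fin n) ℤ)ˣ,
        A * (B : Matrix (Fin n) (Fin n) ℤ) = (B : Matrix (Fin n) (Fin n) ℤ) * A →
        ∃ (m : ℤ) (l : ℕ), l < 2 * k ∧ B = hA.unit ^ m * J ^ l := by
  obtain ⟨ψ, hψ⟩ := exists_algHom_apply_eq_mapMatrix hirr hroot hgen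
  let θ : (Matrix (Fin n) (Fin n) ℤ)ˣ →* (Matrix (Fin n) (Fin n) ℚ)ˣ :=
    Units.map ((Int.castRingHom ℚ).mapMatrix : Matrix (Fin n) (Fin n) ℤ →+* _)
  let ι : (𝓞 K)ˣ →* (Matrix (Fin n) (Fin n) ℚ)ˣ :=
    Units.map (ψ.toRingHom.comp (algebraMap (𝓞 K) K))
  have hθ : Function.Injective θ := Units.map_injective (Matrix.map_injective Int.cast_injective)
  have : Nonempty (Fin n) :=
    nonempty_of_irreducible_charpoly_s10 ((charpoly_mapMatrix_intCast A).symm ▸ hirr)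
  have hι : Function.Injective ι :=
    Units.map_injective (ψ.toRingHom.injective.comp RingOfIntegers.coe_injective)
  have hcent (B : (Matrix (Fin n) (Fin n) ℤ)ˣ) (hB : Commute A B) : ∃ u, θ B = ι u :=
    (exists_units_algHom_apply_eq_of_commute ψ hirr hroot hgen hψ hB).imp
      fun _ hu => Units.ext hu.symm
  obtain ⟨ε, hε⟩ := hcent hA.unit (by simp)
  have hεlam : (ε : K) = lam := ψ.toRingHom.injective <| by
    simpa [θ, ι, hψ] using (congrArg Units.val hε).symm
  obtain ⟨ζ, k, hk, hζord, hζk, hζtors⟩ := Units.exists_generator_torsion K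
  obtain ⟨J, hJ⟩ : ∃ J, θ J = ι ζ :=
    (exists_units_mapMatrix_eq_of_mem_adjoin ψ hψ (hZl ζ).1 (hZl ζ).2).imp fun _ => Units.ext
  refine ⟨J, k, hk, ?_, ?_, ?_, fun B hB => ?_⟩
  · have : hA.unit * J = J * hA.unit :=
      hθ (by rw [map_mul, map_mul, hε, hJ, ← map_mul, mul_comm, map_mul])
    simpa using congrArg Units.val this
  · rw [← orderOf_injective θ hθ, hJ, orderOf_injective ι hι, hζord]
  · exact hθ (by rw [map_pow, hJ, ← map_pow, hζk]; ext : 1; simp [θ, ι])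
  · obtain ⟨u, hu⟩ := hcent B hB
    rw [← hεlam] at hfund
    obtain ⟨m, l, hl, rfl⟩ := Units.exists_eq_zpow_mul_pow hfund hζtors u
    refine ⟨m, l, hl, hθ ?_⟩
    rw [hu, map_mul, map_mul, map_zpow, map_zpow, map_pow, map_pow, hε, hJ]

/-- Let `A ∈ GL(n, ℤ)` have irreducible characteristic polynomial over `ℚ` with root `λ`
generating `F = ℚ(λ)`. Assume `ℤ[λ]^× = 𝓞_F^×` and that `λ` is a fundamental unit
(every unit of `𝓞_F` is a root of unity times an integer power of `λ`). Then there is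
`J ∈ GL(n, ℤ)` commuting with `A`, of finite even order `2k` with `J^k = −I`, such that
every `B ∈ GL(n, ℤ)` commuting with `A` has the form `B = A^m · J^l` with `m ∈ ℤ` and
`0 ≤ l < 2k`; that is, `C(A) = ⟨A⟩ × ⟨J⟩`. -/
theorem centralizer_eq_powers_mul_finite_cyclic (n : ℕ)
    (A : Matrix (Fin n) (Fin n) ℤ) (hA : IsUnit A) (hdet : A.det = 1 ∨ A.det = -1)
    (hirr : Irreducible (A.charpoly.map (Int.castRingHom ℚ)))
    (K : Type) [Field K] [NumberField K] (lam : K)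
    (hroot : Polynomial.aeval lam A.charpoly = 0)
    (hgen : IntermediateField.adjoin ℚ {lam} = ⊤)
    (hZl : ∀ u : (𝓞 K)ˣ, (algebraMap (𝓞 K) K (u : 𝓞 K) ∈ Algebra.adjoin ℤ ({lam} : Set K))
      ∧ (algebraMap (𝓞 K) K ((u⁻¹ : (𝓞 K)ˣ) : 𝓞 K) ∈ Algebra.adjoin ℤ ({lam} : Set K)))
    (hfund : ∀ u : (𝓞 K)ˣ, ∃ (m : ℤ) (z : (𝓞 K)ˣ), IsOfFinOrder z ∧
      algebraMap (𝓞 K) K (u : 𝓞 K) = algebraMap (𝓞 K) K (z : 𝓞 K) * lam ^ m) :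
    ∃ (J : (Matrix (Fin n) (Fin n) ℤ)ˣ) (k : ℕ), 0 < k ∧
      A * (J : Matrix (Fin n) (Fin n) ℤ) = (J : Matrix (Fin n) (Fin n) ℤ) * A ∧
      orderOf J = 2 * k ∧ J ^ k = -1 ∧
      ∀ B : (Matrix (Fin n) (Fin n) ℤ)ˣ,
        A * (B : Matrix (Fin n) (Fin n) ℤ) = (B : Matrix (Fin n) (Fin n) ℤ) * A →
        ∃ (m : ℤ) (l : ℕ), l < 2 * k ∧ B = hA.unit ^ m * J ^ l :=
  centralizer_eq_powers_mul_finite_cyclic_general n A hA hirr K lam hroot hgen hZl hfund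
end

section
/- Let A be the 2×2 integer matrix with rows (0, 1) and (1, 5) (the companion matrix of x² − 5x − 1). Then every 2×2 integer matrix B with det B = ±1 and AB = BA is of the form B = ε·A^m for some integer m and some ε ∈ {1, −1}; that is, C(A) = ⟨A⟩ × ⟨−I⟩. -/
open Matrix

/-- The matrix `A = !![0, 1; 1, 5]` (companion matrix of `x² − 5x − 1`) as an element of
`GL(2, ℤ)`, i.e. a unit of the ring of `2 × 2` integer matrices. -/
def ex15A : (Matrix (Fin 2) (Fin 2) ℤ)ˣ :=
  ⟨!![0, 1; 1, 5], !![-5, 1; 1, 0], by decide, by decide⟩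

/-!
Work with `A = !![0, 1; 1, t]` for any `t > 0`. A matrix commuting with `A` is `p • 1 + q • A`,
with determinant `p² + tpq − q²`. If this is `±1` and `pq > 0`, then `0 < t|p| ≤ |q|`, so
multiplying by `A⁻¹` (which sends `(p, q)` to `(q − tp, p)`) lowers `|p| + |q|`; if `pq < 0`,
multiplying by `A` (which sends `(p, q)` to `(q, p + tq)`) does. Descending until `pq = 0`
leaves `±1` or `±A`.
-/

def IsSignedZPow {R : Type*} [Ring R] (A : Rˣ) (B : R) : Prop :=
  ∃ m ε : ℤ, (ε = 1 ∨ ε = -1) ∧ B = ε • ((A ^ m : Rˣ) : R)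

section Ring

variable {R : Type*} [Ring R] {A : Rˣ} {B : R}

lemma IsSignedZPow.mul_zpow (h : IsSignedZPow A B) (k : ℤ) :
    IsSignedZPow A (B * ↑(A ^ k)) := by
  obtain ⟨m, ε, hε, rfl⟩ := h
  exact ⟨m + k, ε, hε, by rw [smul_mul_assoc, ← Units.val_mul, _root_.zpow_add]⟩

lemma isSignedZPow_mul_iff : IsSignedZPow A (B * A) ↔ IsSignedZPow A B := by
  refine ⟨fun h => ?_, fun h => by simpa using h.mul_zpow 1⟩
  simpa [mul_assoc] using h.mul_zpow (-1)

end Ring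

lemma isUnit_det_mul_units_iff {n R : Type*} [Fintype n] [DecidableEq n] [CommRing R]
    {B : Matrix n n R} {U : (Matrix n n R)ˣ} : IsUnit (B * U).det ↔ IsUnit B.det := by
  rw [det_mul, IsUnit.mul_iff, and_iff_left (isUnits_det_units U)]

def companionUnit (t : ℤ) : (Matrix (Fin 2) (Fin 2) ℤ)ˣ :=
  ⟨!![0, 1; 1, t], !![-t, 1; 1, 0], by simp [← Matrix.ext_iff, Fin.forall_fin_two],
    by simp [← Matrix.ext_iff, Fin.forall_fin_two]⟩

/-- `p • 1 + q • A` for `A = companionUnit t`. -/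
def centralizerMatrix (t p q : ℤ) : Matrix (Fin 2) (Fin 2) ℤ := !![p, q; q, p + t * q]

variable {t p q : ℤ}

lemma centralizerMatrix_mul_companionUnit :
    centralizerMatrix t p q * companionUnit t = centralizerMatrix t q (p + t * q) := by
  rw [centralizerMatrix, centralizerMatrix, companionUnit, Units.val_mk, mul_fin_two]
  ext i j
  fin_cases i <;> fin_cases j <;> simp [mul_comm]

lemma det_centralizerMatrix : (centralizerMatrix t p q).det = p ^ 2 + t * p * q - q ^ 2 := by
  rw [centralizerMatrix, det_fin_two_of]
  ring

lemma eq_centralizerMatrix_of_commute {B : Matrix (Fin 2) (Fin 2) ℤ}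
    (hB : Commute (companionUnit t : Matrix (Fin 2) (Fin 2) ℤ) B) :
    B = centralizerMatrix t (B 0 0) (B 0 1) := by
  obtain ⟨a, b, c, d, rfl⟩ : ∃ a b c d, B = !![a, b; c, d] := ⟨_, _, _, _, eta_fin_two B⟩
  have h := hB.eq
  rw [companionUnit, Units.val_mk, mul_fin_two, mul_fin_two] at h
  simp only [of_apply, cons_val', cons_val_zero, cons_val_one, cons_val_fin_one, centralizerMatrix]
  simp only [EmbeddingLike.apply_eq_iff_eq, vecCons_inj, and_true] at h ⊢
  grind

lemma natAbs_sub_lt_of_mul_pos (ht : 0 < t) (hN : |p ^ 2 + t * p * q - q ^ 2| ≤ 1)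
    (hpq : 0 < p * q) : (q - t * p).natAbs < q.natAbs := by
  have hp : 0 < p ^ 2 := pow_two_pos_of_ne_zero (left_ne_zero_of_mul hpq.ne')
  have hq : 0 < q ^ 2 := pow_two_pos_of_ne_zero (right_ne_zero_of_mul hpq.ne')
  have hpq_le : t * (p * q) ≤ q ^ 2 := by linarith [(abs_le.mp hN).2]
  -- multiply `hpq_le` by `t * (p * q)` and cancel `q ^ 2`
  have htp_sq : (t * p) ^ 2 ≤ t * (p * q) := by
    nlinarith [mul_le_mul_of_nonneg_left hpq_le (by positivity : 0 ≤ t * (p * q))]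
  rw [Int.natAbs_lt_iff_sq_lt]
  nlinarith

lemma natAbs_add_lt_of_mul_neg (ht : 0 < t) (hN : |p ^ 2 + t * p * q - q ^ 2| ≤ 1)
    (hpq : p * q < 0) : (p + t * q).natAbs < p.natAbs := by
  have hN' : |(-q) ^ 2 + t * (-q) * p - p ^ 2| ≤ 1 := by
    rw [← abs_neg]
    convert hN using 2
    ring
  simpa [sub_eq_add_neg] using natAbs_sub_lt_of_mul_pos ht hN' (by linarith)

lemma isSignedZPow_centralizerMatrix_of_mul_eq_zero (hN : |p ^ 2 + t * p * q - q ^ 2| = 1)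
    (hpq : p * q = 0) : IsSignedZPow (companionUnit t) (centralizerMatrix t p q) := by
  rcases mul_eq_zero.mp hpq with rfl | rfl
  · refine ⟨1, q, by simpa [abs_eq] using hN, ?_⟩
    simp [centralizerMatrix, companionUnit, mul_comm]
  · refine ⟨0, p, by simpa [abs_eq] using hN, ?_⟩
    rw [zpow_zero, Units.val_one, one_fin_two]
    simp [centralizerMatrix]

theorem isSignedZPow_centralizerMatrix (ht : 0 < t)
    (hdet : IsUnit (centralizerMatrix t p q).det) :
    IsSignedZPow (companionUnit t) (centralizerMatrix t p q) := by
  induction h : p.natAbs + q.natAbs using Nat.strong_induction_on generalizing p q with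
  | _ n ih =>
  have hN := Int.isUnit_iff_abs_eq.mp (det_centralizerMatrix (t := t) ▸ hdet)
  rcases lt_trichotomy (p * q) 0 with hpq | hpq | hpq
  · rw [← isSignedZPow_mul_iff, centralizerMatrix_mul_companionUnit]
    rw [← isUnit_det_mul_units_iff, centralizerMatrix_mul_companionUnit] at hdet
    refine ih _ ?_ hdet rfl
    have := natAbs_add_lt_of_mul_neg ht hN.le hpq
    omega
  · exact isSignedZPow_centralizerMatrix_of_mul_eq_zero hN hpq
  · have hshift :
        centralizerMatrix t (q - t * p) p * companionUnit t = centralizerMatrix t p q := by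
      rw [centralizerMatrix_mul_companionUnit, sub_add_cancel]
    rw [← hshift, isSignedZPow_mul_iff]
    rw [← hshift, isUnit_det_mul_units_iff] at hdet
    refine ih _ ?_ hdet rfl
    have := natAbs_sub_lt_of_mul_pos ht hN.le hpq
    omega

theorem isSignedZPow_companionUnit_of_commute (ht : 0 < t) {B : Matrix (Fin 2) (Fin 2) ℤ}
    (hdet : IsUnit B.det) (hB : Commute (companionUnit t : Matrix (Fin 2) (Fin 2) ℤ) B) :
    IsSignedZPow (companionUnit t) B := by
  rw [eq_centralizerMatrix_of_commute hB] at hdet ⊢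
  exact isSignedZPow_centralizerMatrix ht hdet

/-- For the companion matrix `A` of `x² − 5x − 1`, every `B ∈ GL(2, ℤ)` commuting with `A`
is of the form `B = ε·A^m` with `m ∈ ℤ` and `ε = ±1`; that is, `C(A) = ⟨A⟩ × ⟨−I⟩`. -/
theorem centralizer_ex15 (B : Matrix (Fin 2) (Fin 2) ℤ)
    (hdet : B.det = 1 ∨ B.det = -1)
    (hcomm : (ex15A : Matrix (Fin 2) (Fin 2) ℤ) * B
      = B * (ex15A : Matrix (Fin 2) (Fin 2) ℤ)) :
    ∃ (m : ℤ) (ε : ℤ), (ε = 1 ∨ ε = -1) ∧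
      B = ε • ((ex15A ^ m : (Matrix (Fin 2) (Fin 2) ℤ)ˣ) : Matrix (Fin 2) (Fin 2) ℤ) :=
  isSignedZPow_companionUnit_of_commute (t := 5) (by norm_num) (Int.isUnit_iff.mpr hdet) hcomm
end

section
/- Let A be the 3×3 integer matrix with rows (0, 1, 0), (0, 0, 1), (1, 0, 1) (the companion matrix of x³ − x² − 1). Then every 3×3 integer matrix B with det B = ±1 and AB = BA is of the form B = ε·A^m for some integer m and some ε ∈ {1, −1}; that is, C(A) = ⟨A⟩ × ⟨−I⟩. -/
open Matrix

/-- The matrix `A` with rows `(0,1,0), (0,0,1), (1,0,1)` (companion matrix of `x³ − x² − 1`)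
as an element of `GL(3, ℤ)`, i.e. a unit of the ring of `3 × 3` integer matrices. -/
def ex16A : (Matrix (Fin 3) (Fin 3) ℤ)ˣ :=
  ⟨!![0, 1, 0; 0, 0, 1; 1, 0, 1], !![0, -1, 1; 1, 0, 0; 0, 1, 0], by decide, by decide⟩

/-!
A matrix commuting with the companion matrix `A` is a polynomial `p(A) = a + b A + c A²`, and for
every root `x` of `X³ - X² - 1` the vector `(1, x, x²)` is an eigenvector of `p(A)` with eigenvalue
`p(x)`. Over `ℂ` the three roots, a real `α ≈ 1.4656` and a non-real conjugate pair `β, β̄`, give a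
Vandermonde eigenbasis, so `det p(A) = p(α) |p(β)|²` and `tr (p(A) Aᵏ) = p(α) αᵏ + 2 Re (p(β) βᵏ)`;
for `p(A) = A` the first identity gives `|β|² = 1/α < 1`.

Multiplying `B` by `±A⁻ᵐ` moves `p(α)` into `[1, α)`. Then `det B = ±1` forces `|p(β)| ≤ 1`, so the
integers `tr (B Aᵏ)`, `k = 0, 1, 2`, lie in short intervals. They determine `(a, b, c)`, and a
finite search leaves only `A⁻¹, 1, A, A²`.
-/

section Diagonalization

variable {n : Type*} [Fintype n] [DecidableEq n]

theorem Matrix.det_eq_prod_of_mul_eq_mul_diagonal {R : Type*} [CommRing R] [IsDomain R]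
    {M W : Matrix n n R} {μ : n → R} (hW : W.det ≠ 0) (h : M * W = W * diagonal μ) : M.det = ∏ i, μ i := by
  have hdet := congrArg det h
  rw [det_mul, det_mul, det_diagonal, mul_comm W.det] at hdet
  exact mul_right_cancel₀ hW hdet

theorem Matrix.trace_eq_sum_of_mul_eq_mul_diagonal {K : Type*} [Field K]
    {M W : Matrix n n K} {μ : n → K} (hW : W.det ≠ 0) (h : M * W = W * diagonal μ) : M.trace = ∑ i, μ i := by
  have hWu : IsUnit W.det := hW.isUnit
  calc M.trace = (M * W * W⁻¹).trace := by rw [Matrix.mul_assoc, mul_nonsing_inv W hWu, mul_one]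
    _ = (W⁻¹ * W * diagonal μ).trace := by rw [h, trace_mul_cycle, Matrix.mul_assoc]
    _ = ∑ i, μ i := by rw [nonsing_inv_mul W hWu, one_mul, trace_diagonal]

end Diagonalization

theorem Int.mem_Icc_of_cast_mem_Ioo {t a b : ℤ} (h : (t : ℝ) ∈ Set.Ioo ((a : ℝ) - 1) (b + 1)) :
    t ∈ Set.Icc a b := by
  obtain ⟨h₁, h₂⟩ := h
  have h₁' : a - 1 < t := by exact_mod_cast h₁
  have h₂' : t < b + 1 := by exact_mod_cast h₂
  constructor <;> omega

theorem exists_sign_mul_zpow_mem_Ico {α y : ℝ} (hα : 1 < α) (hy : y ≠ 0) :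
    ∃ ε : ℤ, (ε = 1 ∨ ε = -1) ∧ ∃ m : ℤ, ε * y * α ^ (-m) ∈ Set.Ico 1 α := by
  obtain ⟨ε, hε, hεy⟩ : ∃ ε : ℤ, (ε = 1 ∨ ε = -1) ∧ 0 < ε * y := by
    rcases hy.lt_or_gt with h | h
    · exact ⟨-1, Or.inr rfl, by push_cast; linarith⟩
    · exact ⟨1, Or.inl rfl, by push_cast; linarith⟩
  obtain ⟨m, hm₁, hm₂⟩ := exists_mem_Ico_zpow hεy hα
  have hαm : 0 < α ^ m := zpow_pos (by linarith) m
  refine ⟨ε, hε, m, ?_, ?_⟩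
  · rwa [_root_.zpow_neg, ← div_eq_mul_inv, le_div_iff₀ hαm, one_mul]
  · rwa [_root_.zpow_neg, ← div_eq_mul_inv, div_lt_iff₀ hαm, mul_comm α,
      ← zpow_add_one₀ (zero_lt_one.trans hα).ne']

local notation "𝔸" => (ex16A : Matrix (Fin 3) (Fin 3) ℤ)

namespace ex16A

def ofCoeffs (a b c : ℤ) : Matrix (Fin 3) (Fin 3) ℤ := a • 1 + b • 𝔸 + c • 𝔸 ^ 2

theorem ofCoeffs_eq (a b c : ℤ) :
    ofCoeffs a b c = !![a, b, c; c, a, b + c; b + c, c, a + b + c] := by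
  ext i j
  fin_cases i <;> fin_cases j <;> simp [ofCoeffs, ex16A, sq, Matrix.intCast_apply]

theorem eq_ofCoeffs_of_commute {B : Matrix (Fin 3) (Fin 3) ℤ} (hB : Commute 𝔸 B) :
    B = ofCoeffs (B 0 0) (B 0 1) (B 0 2) := by
  have h : ∀ i j, (𝔸 * B) i j = (B * 𝔸) i j := fun i j => by rw [hB.eq]
  have h10 := h 1 0; have h11 := h 1 1; have h12 := h 1 2
  have h20 := h 2 0; have h21 := h 2 1; have h22 := h 2 2
  simp [ex16A, Matrix.mul_apply, Fin.sum_univ_three] at h10 h11 h12 h20 h21 h22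
  ext i j
  fin_cases i <;> fin_cases j <;> simp [ofCoeffs_eq] <;> omega

def normForm (a b c : ℤ) : ℤ :=
  a ^ 3 + a ^ 2 * b + a ^ 2 * c - 3 * a * b * c - 2 * a * c ^ 2 + b ^ 3 + b ^ 2 * c + c ^ 3

theorem det_ofCoeffs (a b c : ℤ) : (ofCoeffs a b c).det = normForm a b c := by
  rw [ofCoeffs_eq, Matrix.det_fin_three, normForm]
  simp
  ring

theorem trace_ofCoeffs (a b c : ℤ) : (ofCoeffs a b c).trace = 3 * a + b + c ∧
    (ofCoeffs a b c * 𝔸).trace = a + b + 4 * c ∧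
    (ofCoeffs a b c * 𝔸 ^ 2).trace = a + 4 * b + 5 * c := by
  simp [ofCoeffs_eq, ex16A, sq, Matrix.trace_fin_three]
  refine ⟨by ring, by ring, by ring⟩

theorem ofCoeffs_eq_zpow :
    ofCoeffs 0 (-1) 1 = ↑(ex16A ^ (-1 : ℤ)) ∧ ofCoeffs 1 0 0 = ↑(ex16A ^ (0 : ℤ)) ∧
    ofCoeffs 0 1 0 = ↑(ex16A ^ (1 : ℤ)) ∧ ofCoeffs 0 0 1 = ↑(ex16A ^ (2 : ℤ)) := by
  simp only [ofCoeffs_eq, _root_.zpow_neg_one, zpow_zero, zpow_one, _root_.zpow_two, Units.val_mul]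
  refine ⟨?_, ?_, ?_, ?_⟩ <;> decide

section Eigenvalue

variable {K : Type*} [CommRing K]

def rootVec (x : K) : Fin 3 → K := ![1, x, x ^ 2]

/-- For `B = ofCoeffs a b c` this is `a + b x + c x²`. -/
def ev (x : K) (B : Matrix (Fin 3) (Fin 3) ℤ) : K := B 0 0 + B 0 1 * x + B 0 2 * x ^ 2

theorem ev_eq_mulVec_rootVec (x : K) (B : Matrix (Fin 3) (Fin 3) ℤ) :
    ev x B = (B.map (Int.cast : ℤ → K) *ᵥ rootVec x) 0 := by
  simp [ev, rootVec, Matrix.mulVec, dotProduct, Fin.sum_univ_three]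

theorem mulVec_rootVec {x : K} (hx : x ^ 3 = x ^ 2 + 1) {B : Matrix (Fin 3) (Fin 3) ℤ}
    (hB : Commute 𝔸 B) : B.map (Int.cast : ℤ → K) *ᵥ rootVec x = ev x B • rootVec x := by
  rw [eq_ofCoeffs_of_commute hB]
  generalize B 0 0 = a, B 0 1 = b, B 0 2 = c
  ext i
  fin_cases i <;> simp [ofCoeffs_eq, ev, rootVec, Matrix.mulVec, dotProduct, Fin.sum_univ_three]
  · linear_combination (-(c : K)) * hx
  · linear_combination (-(b : K) - c * (x + 1)) * hx

theorem ev_mul {x : K} (hx : x ^ 3 = x ^ 2 + 1) (B : Matrix (Fin 3) (Fin 3) ℤ)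
    {C : Matrix (Fin 3) (Fin 3) ℤ} (hC : Commute 𝔸 C) : ev x (B * C) = ev x B * ev x C := by
  have hmap : (B * C).map (Int.cast : ℤ → K) = B.map Int.cast * C.map Int.cast :=
    Matrix.map_mul (f := Int.castRingHom K)
  rw [ev_eq_mulVec_rootVec, hmap, ← Matrix.mulVec_mulVec, mulVec_rootVec hx hC,
    Matrix.mulVec_smul, Pi.smul_apply, smul_eq_mul, ← ev_eq_mulVec_rootVec, mul_comm]

theorem ev_smul (x : K) (ε : ℤ) (B : Matrix (Fin 3) (Fin 3) ℤ) : ev x (ε • B) = ε * ev x B := by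
  simp only [ev, Matrix.smul_apply, smul_eq_mul, Int.cast_mul]
  ring

theorem ev_one (x : K) : ev x 1 = 1 := by simp [ev]

theorem ev_ex16A (x : K) : ev x 𝔸 = x := by simp [ev, ex16A]

theorem ev_pow {x : K} (hx : x ^ 3 = x ^ 2 + 1) (n : ℕ) : ev x (𝔸 ^ n) = x ^ n := by
  induction n with
  | zero => simpa using ev_one x
  | succ n ih => rw [pow_succ, ev_mul hx _ (Commute.refl _), ih, ev_ex16A, pow_succ]

theorem commute_zpow (m : ℤ) : Commute 𝔸 ↑(ex16A ^ m) :=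
  ((Commute.refl ex16A).zpow_right m).units_val

theorem ev_zpow {K : Type*} [Field K] {x : K} (hx : x ^ 3 = x ^ 2 + 1) (m : ℤ) :
    ev x ↑(ex16A ^ m) = x ^ m := by
  obtain ⟨n, rfl | rfl⟩ := m.eq_nat_or_neg
  · rw [zpow_natCast, zpow_natCast, Units.val_pow_eq_pow_val, ev_pow hx]
  · have h := ev_mul hx (↑(ex16A ^ (-(n : ℤ)))) (commute_zpow n)
    rw [← Units.val_mul, ← _root_.zpow_add, neg_add_cancel, zpow_zero, Units.val_one, ev_one,
      zpow_natCast, Units.val_pow_eq_pow_val, ev_pow hx] at h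
    rw [_root_.zpow_neg x, zpow_natCast x]
    exact eq_inv_of_mul_eq_one_left h.symm

theorem ev_map {K L : Type*} [CommRing K] [CommRing L] (f : K →+* L) (x : K)
    (B : Matrix (Fin 3) (Fin 3) ℤ) : ev (f x) B = f (ev x B) := by
  simp [ev]

end Eigenvalue

theorem map_mul_vandermonde_transpose {K : Type*} [CommRing K] {x : Fin 3 → K}
    (hx : ∀ i, x i ^ 3 = x i ^ 2 + 1) {B : Matrix (Fin 3) (Fin 3) ℤ} (hB : Commute 𝔸 B) :
    B.map (Int.cast : ℤ → K) * (vandermonde x)ᵀ =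
      (vandermonde x)ᵀ * diagonal fun i => ev (x i) B := by
  have hcol : ∀ j, (fun i => (vandermonde x)ᵀ i j) = rootVec (x j) := fun j => by
    ext i; fin_cases i <;> simp [rootVec]
  ext i j
  have hij := congrFun (mulVec_rootVec (hx j) hB) i
  rw [← hcol j] at hij
  rw [mul_diagonal]
  simpa only [mul_apply, mulVec, dotProduct, Pi.smul_apply, smul_eq_mul,
    mul_comm (ev (x j) B)] using hij

theorem det_eq_prod_ev {K : Type*} [Field K] {x : Fin 3 → K} (hx : ∀ i, x i ^ 3 = x i ^ 2 + 1)
    (hinj : Function.Injective x) {B : Matrix (Fin 3) (Fin 3) ℤ} (hB : Commute 𝔸 B) :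
    (B.det : K) = ∏ i, ev (x i) B := by
  rw [Int.cast_det]
  exact det_eq_prod_of_mul_eq_mul_diagonal (by rwa [det_transpose, det_vandermonde_ne_zero_iff])
    (map_mul_vandermonde_transpose hx hB)

theorem trace_eq_sum_ev {K : Type*} [Field K] {x : Fin 3 → K} (hx : ∀ i, x i ^ 3 = x i ^ 2 + 1)
    (hinj : Function.Injective x) {B : Matrix (Fin 3) (Fin 3) ℤ} (hB : Commute 𝔸 B) :
    (B.trace : K) = ∑ i, ev (x i) B :=
  (AddMonoidHom.map_trace (Int.castRingHom K) B).trans <|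
    trace_eq_sum_of_mul_eq_mul_diagonal (by rwa [det_transpose, det_vandermonde_ne_zero_iff])
      (map_mul_vandermonde_transpose hx hB)

theorem exists_real_root : ∃ α : ℝ, α ^ 3 = α ^ 2 + 1 ∧ 1.42 ≤ α ∧ α ≤ 1.5 := by
  have hcont : ContinuousOn (fun x : ℝ => x ^ 3 - x ^ 2 - 1) (Set.Icc 1.42 1.5) := by fun_prop
  obtain ⟨α, ⟨hlo, hhi⟩, hα⟩ :=
    intermediate_value_Icc (by norm_num) hcont (show (0 : ℝ) ∈ Set.Icc _ _ by norm_num)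
  exact ⟨α, by linarith [hα], hlo, hhi⟩

theorem exists_nonreal_root {α : ℝ} (hα : α ^ 3 = α ^ 2 + 1) (hα₁ : 1 < α) :
    ∃ β : ℂ, β ^ 3 = β ^ 2 + 1 ∧ β.im ≠ 0 := by
  set r := √(3 * α ^ 2 - 2 * α - 1)
  have hr : 0 < r := Real.sqrt_pos.mpr (by nlinarith)
  have hs : (Complex.I * r) ^ 2 = -(3 * α ^ 2 - 2 * α - 1) := by
    rw [mul_pow, Complex.I_sq, ← Complex.ofReal_pow, Real.sq_sqrt (by nlinarith)]; push_cast; ring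
  -- `β` is a root of the quadratic factor `X² + (α - 1) X + α² - α` of `X³ - X² - 1`
  refine ⟨(1 - α + Complex.I * r) / 2, ?_, ?_⟩
  · have hαC : (α : ℂ) ^ 3 = α ^ 2 + 1 := by exact_mod_cast hα
    linear_combination (((1 - α + Complex.I * r) / 2 - α) / 4) * hs + hαC
  · simp [hr.ne']

section ComplexRoots

open Complex ComplexConjugate

variable {α : ℝ} {β : ℂ}

theorem ev_ofReal (x : ℝ) (B : Matrix (Fin 3) (Fin 3) ℤ) : ev (x : ℂ) B = ev x B :=
  ev_map ofRealHom x B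

theorem ev_conj (z : ℂ) (B : Matrix (Fin 3) (Fin 3) ℤ) : ev (conj z) B = conj (ev z B) :=
  ev_map (starRingEnd ℂ) z B

def rootTriple (α : ℝ) (β : ℂ) : Fin 3 → ℂ := ![α, β, conj β]

theorem rootTriple_pow_three (hα : α ^ 3 = α ^ 2 + 1) (hβ : β ^ 3 = β ^ 2 + 1) (i : Fin 3) :
    rootTriple α β i ^ 3 = rootTriple α β i ^ 2 + 1 := by
  fin_cases i
  · simp only [rootTriple, Fin.zero_eta, Matrix.cons_val_zero]; exact_mod_cast hα
  · exact hβ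
  · simpa [rootTriple] using congrArg conj hβ

theorem rootTriple_injective (hβ : β.im ≠ 0) : Function.Injective (rootTriple α β) := by
  intro i j h
  have him := congrArg im h
  fin_cases i <;> fin_cases j <;> simp [rootTriple] at him ⊢ <;> grind

theorem det_eq_ev_mul_normSq (hα : α ^ 3 = α ^ 2 + 1) (hβ : β ^ 3 = β ^ 2 + 1) (hβim : β.im ≠ 0)
    {B : Matrix (Fin 3) (Fin 3) ℤ} (hB : Commute 𝔸 B) :
    (B.det : ℝ) = ev α B * normSq (ev β B) := by
  apply ofReal_injective
  rw [ofReal_intCast, det_eq_prod_ev (rootTriple_pow_three hα hβ) (rootTriple_injective hβim) hB,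
    Fin.prod_univ_three, ofReal_mul, ← mul_conj, mul_assoc]
  simp [rootTriple, ev_ofReal, ev_conj]

theorem trace_mul_pow_eq (hα : α ^ 3 = α ^ 2 + 1) (hβ : β ^ 3 = β ^ 2 + 1) (hβim : β.im ≠ 0)
    {B : Matrix (Fin 3) (Fin 3) ℤ} (hB : Commute 𝔸 B) (k : ℕ) :
    ((B * 𝔸 ^ k).trace : ℝ) = ev α B * α ^ k + 2 * (ev β B * β ^ k).re := by
  have hroots := rootTriple_pow_three hα hβ
  apply ofReal_injective
  rw [ofReal_intCast, trace_eq_sum_ev hroots (rootTriple_injective hβim)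
    (hB.mul_right ((Commute.refl _).pow_right k)), Fin.sum_univ_three]
  simp only [ev_mul (hroots _) _ ((Commute.refl _).pow_right k), ev_pow (hroots _)]
  simp only [rootTriple, ev_ofReal, ev_conj, Matrix.cons_val, ← map_pow, ← map_mul, add_assoc,
    add_conj]
  push_cast
  ring

theorem normSq_lt_one (hα : α ^ 3 = α ^ 2 + 1) (hβ : β ^ 3 = β ^ 2 + 1)
    (hβim : β.im ≠ 0) : normSq β < 1 := by
  have h := det_eq_ev_mul_normSq hα hβ hβim (Commute.refl 𝔸)
  have hdet : det 𝔸 = 1 := by simp [ex16A, det_fin_three]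
  rw [hdet, ev_ex16A, ev_ex16A, Int.cast_one] at h
  nlinarith [normSq_nonneg β]

theorem abs_re_ev_mul_pow_le_one (hα : α ^ 3 = α ^ 2 + 1) (hβ : β ^ 3 = β ^ 2 + 1)
    (hβim : β.im ≠ 0) {C : Matrix (Fin 3) (Fin 3) ℤ} (hC : Commute 𝔸 C) (hdet : IsUnit C.det)
    (hy : 1 ≤ ev α C) (k : ℕ) : |(ev β C * β ^ k).re| ≤ 1 := by
  have hz : ‖ev β C‖ ≤ 1 := by
    have h := det_eq_ev_mul_normSq hα hβ hβim hC
    rw [← sq_le_one_iff₀ (norm_nonneg _), ← normSq_eq_norm_sq]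
    rcases Int.isUnit_iff.mp hdet with hd | hd <;> rw [hd] at h <;> push_cast at h <;>
      nlinarith [normSq_nonneg (ev β C)]
  have hβ' : ‖β‖ ≤ 1 := by
    rw [← sq_le_one_iff₀ (norm_nonneg _), ← normSq_eq_norm_sq]
    exact (normSq_lt_one hα hβ hβim).le
  refine (abs_re_le_norm _).trans ?_
  rw [norm_mul, norm_pow]
  exact mul_le_one₀ hz (by positivity) (pow_le_one₀ (norm_nonneg _) hβ')

end ComplexRoots

theorem exists_eq_zpow_of_trace_mem_Icc {C : Matrix (Fin 3) (Fin 3) ℤ} (hC : Commute 𝔸 C)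
    (hdet : IsUnit C.det) (h₀ : C.trace ∈ Set.Icc (-1) 3) (h₁ : (C * 𝔸).trace ∈ Set.Icc 0 4)
    (h₂ : (C * 𝔸 ^ 2).trace ∈ Set.Icc 1 5) : ∃ j : ℤ, C = ↑(ex16A ^ j) := by
  rw [eq_ofCoeffs_of_commute hC] at hdet h₀ h₁ h₂ ⊢
  generalize C 0 0 = a, C 0 1 = b, C 0 2 = c at *
  obtain ⟨t₀, t₁, t₂⟩ := trace_ofCoeffs a b c
  rw [det_ofCoeffs, Int.isUnit_iff] at hdet
  rw [t₀, Set.mem_Icc] at h₀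
  rw [t₁, Set.mem_Icc] at h₁
  rw [t₂, Set.mem_Icc] at h₂
  -- the trace form has determinant `-31`, and the trace bounds confine `(a, b, c)` to this box
  have hcases :
      ∀ a ∈ Finset.Icc (-1 : ℤ) 1, ∀ b ∈ Finset.Icc (-3 : ℤ) 3, ∀ c ∈ Finset.Icc (-2 : ℤ) 2,
        (normForm a b c = 1 ∨ normForm a b c = -1) →
        (-1 ≤ 3 * a + b + c ∧ 3 * a + b + c ≤ 3) → (0 ≤ a + b + 4 * c ∧ a + b + 4 * c ≤ 4) →
        (1 ≤ a + 4 * b + 5 * c ∧ a + 4 * b + 5 * c ≤ 5) →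
        (a, b, c) = (0, -1, 1) ∨ (a, b, c) = (1, 0, 0) ∨ (a, b, c) = (0, 1, 0) ∨
          (a, b, c) = (0, 0, 1) := by
    decide
  rcases hcases a (by simp; omega) b (by simp; omega) c (by simp; omega) hdet h₀ h₁ h₂
    with h | h | h | h <;> simp only [Prod.mk.injEq] at h <;> obtain ⟨rfl, rfl, rfl⟩ := h
  exacts [⟨-1, ofCoeffs_eq_zpow.1⟩, ⟨0, ofCoeffs_eq_zpow.2.1⟩, ⟨1, ofCoeffs_eq_zpow.2.2.1⟩,
    ⟨2, ofCoeffs_eq_zpow.2.2.2⟩]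

theorem exists_eq_zpow_of_ev_mem_Ico {α : ℝ} {β : ℂ} (hα : α ^ 3 = α ^ 2 + 1) (hα₁ : 1.42 ≤ α)
    (hα₂ : α ≤ 1.5) (hβ : β ^ 3 = β ^ 2 + 1) (hβim : β.im ≠ 0) {C : Matrix (Fin 3) (Fin 3) ℤ}
    (hC : Commute 𝔸 C) (hdet : IsUnit C.det) (hev : ev α C ∈ Set.Ico 1 α) :
    ∃ j : ℤ, C = ↑(ex16A ^ j) := by
  obtain ⟨hy₁, hy₂⟩ := hev
  have hre := abs_re_ev_mul_pow_le_one hα hβ hβim hC hdet hy₁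
  have hyk : ∀ k : ℕ, α ^ k ≤ ev α C * α ^ k ∧ ev α C * α ^ k < α ^ (k + 1) := fun k =>
    ⟨le_mul_of_one_le_left (by positivity) hy₁,
      by rw [pow_succ']; exact mul_lt_mul_of_pos_right hy₂ (by positivity)⟩
  have htr := trace_mul_pow_eq hα hβ hβim hC
  have hα2 : 2 < α ^ 2 := by nlinarith
  have hα2' : α ^ 2 ≤ 2.25 := by nlinarith
  refine exists_eq_zpow_of_trace_mem_Icc hC hdet ?_ ?_ ?_
  · have := htr 0; have := abs_le.mp (hre 0); have := hyk 0
    simp only [pow_zero, mul_one, zero_add, pow_one] at *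
    exact Int.mem_Icc_of_cast_mem_Ioo ⟨by push_cast; linarith, by push_cast; linarith⟩
  · have := htr 1; have := abs_le.mp (hre 1); have := hyk 1
    simp only [pow_one, Nat.reduceAdd] at *
    exact Int.mem_Icc_of_cast_mem_Ioo ⟨by push_cast; linarith, by push_cast; linarith⟩
  · have := htr 2; have := abs_le.mp (hre 2); have := hyk 2
    simp only [Nat.reduceAdd, hα] at this
    exact Int.mem_Icc_of_cast_mem_Ioo ⟨by push_cast; linarith, by push_cast; linarith⟩

end ex16A

open ex16A

/-- For the companion matrix `A` of `x³ − x² − 1`, every `B ∈ GL(3, ℤ)` commuting with `A`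
is of the form `B = ε·A^m` with `m ∈ ℤ` and `ε = ±1`; that is, `C(A) = ⟨A⟩ × ⟨−I⟩`. -/
theorem centralizer_ex16 (B : Matrix (Fin 3) (Fin 3) ℤ)
    (hdet : B.det = 1 ∨ B.det = -1)
    (hcomm : (ex16A : Matrix (Fin 3) (Fin 3) ℤ) * B
      = B * (ex16A : Matrix (Fin 3) (Fin 3) ℤ)) :
    ∃ (m : ℤ) (ε : ℤ), (ε = 1 ∨ ε = -1) ∧
      B = ε • ((ex16A ^ m : (Matrix (Fin 3) (Fin 3) ℤ)ˣ) : Matrix (Fin 3) (Fin 3) ℤ) := by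
  obtain ⟨α, hα, hα₁, hα₂⟩ := exists_real_root
  obtain ⟨β, hβ, hβim⟩ := exists_nonreal_root hα (by linarith)
  have hB : Commute 𝔸 B := hcomm
  have hy : ev α B ≠ 0 := fun h0 => by
    have h := det_eq_ev_mul_normSq hα hβ hβim hB
    rcases hdet with hd | hd <;> simp [hd, h0] at h
  obtain ⟨ε, hε, m, hm⟩ := exists_sign_mul_zpow_mem_Ico (by linarith) hy
  set C := ε • B * ((ex16A ^ (-m) : (Matrix (Fin 3) (Fin 3) ℤ)ˣ) : Matrix (Fin 3) (Fin 3) ℤ)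
    with hCdef
  have hC : Commute 𝔸 C := (hB.smul_right ε).mul_right (commute_zpow _)
  have hCdet : IsUnit C.det := by
    rw [det_mul, det_smul]
    exact ((Int.isUnit_iff.mpr hε).pow _ |>.mul (Int.isUnit_iff.mpr hdet)).mul
      ((isUnit_iff_isUnit_det _).mp (Units.isUnit _))
  obtain ⟨j, hj⟩ := exists_eq_zpow_of_ev_mem_Ico hα hα₁ hα₂ hβ hβim hC hCdet
    (by rwa [ev_mul hα _ (commute_zpow _), ev_smul, ev_zpow hα])
  refine ⟨j + m, ε, hε, ?_⟩
  calc B = ε • (C * ↑(ex16A ^ m)) := by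
        rw [hCdef, Matrix.mul_assoc, ← Units.val_mul, ← _root_.zpow_add, neg_add_cancel, zpow_zero,
          Units.val_one, Matrix.mul_one, smul_smul]
        rcases hε with rfl | rfl <;> norm_num
    _ = ε • ↑(ex16A ^ (j + m)) := by rw [hj, ← Units.val_mul, ← _root_.zpow_add]
end

section
/- Let A be the 2×2 integer matrix with rows (18, 5) and (65, 18) (with characteristic polynomial x² − 36x − 1). Then every 2×2 integer matrix B with det B = ±1 and AB = BA is of the form B = ε·A^m for some integer m and some ε ∈ {1, −1}; that is, C(A) = ⟨A⟩ × ⟨−I⟩. -/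
/-!
A matrix commuting with `A = !![18, 5; 65, 18]` has the shape `!![a, b; 13 b, a]`, the matrix of
multiplication by `a + b√13`, and its determinant is the norm `a² - 13 b²`. So `B ∈ C(A)` is the image
of a unit of `ℤ[√13]`, and `A` is the image of `η = 18 + 5√13`. Every unit is `±η^m`: after replacing
`u` by `±u` or `±u⁻¹` it has nonnegative coordinates, and then a descent on the coefficient of `√13`
(multiplying by `η⁻¹ = -18 + 5√13`) shows it is a power of `η`.
-/

open Matrix

def ex18A : (Matrix (Fin 2) (Fin 2) ℤ)ˣ :=
  ⟨!![18, 5; 65, 18], !![-18, 5; 65, -18], by decide, by decide⟩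

namespace Zsqrtd

def toMatrix (d : ℤ) : ℤ√d →+* Matrix (Fin 2) (Fin 2) ℤ where
  toFun z := !![z.re, z.im; d * z.im, z.re]
  map_one' := by ext i j; fin_cases i <;> fin_cases j <;> simp
  map_mul' x y := by ext i j; fin_cases i <;> fin_cases j <;> simp [Matrix.mul_apply] <;> ring
  map_zero' := by ext i j; fin_cases i <;> fin_cases j <;> simp
  map_add' x y := by ext i j; fin_cases i <;> fin_cases j <;> simp [mul_add]

section

variable {d : ℤ}

theorem toMatrix_apply (z : ℤ√d) : toMatrix d z = !![z.re, z.im; d * z.im, z.re] := rfl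

theorem det_toMatrix (z : ℤ√d) : (toMatrix d z).det = z.norm := by
  rw [toMatrix_apply, det_fin_two_of, norm_def]
  ring

theorem eq_toMatrix_of_commute {z : ℤ√d} (hz : z.im ≠ 0) {B : Matrix (Fin 2) (Fin 2) ℤ}
    (h : Commute (toMatrix d z) B) : B = toMatrix d ⟨B 0 0, B 0 1⟩ := by
  have h00 := congrFun (congrFun h.eq 0) 0
  have h01 := congrFun (congrFun h.eq 0) 1
  simp only [toMatrix_apply, mul_apply, Fin.sum_univ_two, of_apply, cons_val', cons_val_zero,
    cons_val_one, empty_val', cons_val_fin_one] at h00 h01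
  have h10 : B 1 0 = d * B 0 1 := mul_left_cancel₀ hz (by linear_combination h00)
  have h11 : B 1 1 = B 0 0 := mul_left_cancel₀ hz (by linear_combination h01)
  rw [eta_fin_two B, toMatrix_apply, h10, h11]
  rfl

theorem isUnit_iff_norm_eq_one_or_eq_neg_one (z : ℤ√d) :
    IsUnit z ↔ z.norm = 1 ∨ z.norm = -1 := by
  rw [isUnit_iff_norm_isUnit, Int.isUnit_iff]

theorem re_mul_im_inv (u : (ℤ√d)ˣ) :
    (↑u⁻¹ : ℤ√d).re * (↑u⁻¹ : ℤ√d).im = -((u : ℤ√d).re * (u : ℤ√d).im) := by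
  have hN := (isUnit_iff_norm_eq_one_or_eq_neg_one _).mp u.isUnit
  have hinv : (↑u⁻¹ : ℤ√d) = (u : ℤ√d).norm * star (u : ℤ√d) := by
    rw [Units.inv_eq_of_mul_eq_one_right]
    rw [← mul_assoc, mul_comm (u : ℤ√d), mul_assoc, ← norm_eq_mul_conj, ← Int.cast_mul]
    rcases hN with h | h <;> simp [h]
  rw [hinv]
  rcases hN with h | h <;> simp [h]

end

def fundamentalUnit13 : (ℤ√13)ˣ := ⟨⟨18, 5⟩, ⟨-18, 5⟩, by decide, by decide⟩

theorem five_le_im_of_isUnit {z : ℤ√13} (hz : IsUnit z) (hre : 0 ≤ z.re) (him : 0 < z.im) :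
    5 ≤ z.im := by
  obtain ⟨a, b⟩ := z
  have hN := (isUnit_iff_norm_eq_one_or_eq_neg_one _).mp hz
  simp only [norm_def] at hre him hN ⊢
  by_contra! hb
  have ha : a < 15 := by rcases hN with h | h <;> nlinarith
  interval_cases b <;> interval_cases a <;> omega

/-- The three quantities are the coordinates of `z * η⁻¹ = z * (-18 + 5√13)`: it again has
nonnegative coordinates, and a smaller coefficient of `√13`. -/
theorem descent_bounds {z : ℤ√13} (hz : IsUnit z) (hre : 0 ≤ z.re) (him : 5 ≤ z.im) :
    0 ≤ 65 * z.im - 18 * z.re ∧ 0 ≤ 5 * z.re - 18 * z.im ∧ 5 * z.re - 18 * z.im < z.im := by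
  have hN := (isUnit_iff_norm_eq_one_or_eq_neg_one _).mp hz
  rw [norm_def] at hN
  refine ⟨?_, ?_, ?_⟩ <;> rcases hN with h | h <;> nlinarith

theorem exists_pow_eq_of_nonneg (u : (ℤ√13)ˣ) (hre : 0 ≤ (u : ℤ√13).re)
    (him : 0 ≤ (u : ℤ√13).im) : ∃ n : ℕ, fundamentalUnit13 ^ n = u := by
  induction h : (u : ℤ√13).im.toNat using Nat.strong_induction_on generalizing u with
  | _ k ih =>
  rcases him.eq_or_lt with him0 | himpos
  · refine ⟨0, Units.ext ?_⟩
    have hN := (isUnit_iff_norm_eq_one_or_eq_neg_one _).mp u.isUnit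
    rw [norm_def, ← him0] at hN
    have hre1 : (u : ℤ√13).re = 1 := by rcases hN with h | h <;> nlinarith
    ext <;> simp [hre1, him0]
  obtain ⟨hre', him', hlt⟩ :=
    descent_bounds u.isUnit hre (five_le_im_of_isUnit u.isUnit hre himpos)
  set v := u * fundamentalUnit13⁻¹ with hv
  have hvre : (v : ℤ√13).re = 65 * (u : ℤ√13).im - 18 * (u : ℤ√13).re := by
    simp only [hv, fundamentalUnit13, Units.inv_mk, Units.val_mul, re_mul]
    ring
  have hvim : (v : ℤ√13).im = 5 * (u : ℤ√13).re - 18 * (u : ℤ√13).im := by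
    simp only [hv, fundamentalUnit13, Units.inv_mk, Units.val_mul, im_mul]
    ring
  obtain ⟨n, hn⟩ := ih _ (by omega) v (hvre ▸ hre') (hvim ▸ him') rfl
  exact ⟨n + 1, by rw [pow_succ, hn, hv, inv_mul_cancel_right]⟩

theorem exists_zpow_eq_of_re_mul_im_nonneg (u : (ℤ√13)ˣ)
    (hu : 0 ≤ (u : ℤ√13).re * (u : ℤ√13).im) :
    ∃ m : ℤ, u = fundamentalUnit13 ^ m ∨ u = -fundamentalUnit13 ^ m := by
  rcases mul_nonneg_iff.mp hu with ⟨hre, him⟩ | ⟨hre, him⟩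
  · obtain ⟨n, hn⟩ := exists_pow_eq_of_nonneg u hre him
    exact ⟨n, Or.inl (by rw [zpow_natCast, hn])⟩
  · obtain ⟨n, hn⟩ := exists_pow_eq_of_nonneg (-u) (by simpa using hre) (by simpa using him)
    exact ⟨n, Or.inr (by rw [zpow_natCast, hn, neg_neg])⟩

theorem exists_zpow_eq (u : (ℤ√13)ˣ) :
    ∃ m : ℤ, u = fundamentalUnit13 ^ m ∨ u = -fundamentalUnit13 ^ m := by
  by_cases hu : 0 ≤ (u : ℤ√13).re * (u : ℤ√13).im
  · exact exists_zpow_eq_of_re_mul_im_nonneg u hu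
  obtain ⟨m, hm | hm⟩ :=
    exists_zpow_eq_of_re_mul_im_nonneg u⁻¹ (by rw [re_mul_im_inv]; linarith)
  · exact ⟨-m, Or.inl (by rw [_root_.zpow_neg, ← hm, inv_inv])⟩
  · exact ⟨-m, Or.inr (by rw [_root_.zpow_neg, neg_inv, ← hm, inv_inv])⟩

theorem toMatrix_fundamentalUnit13 :
    toMatrix 13 (fundamentalUnit13 : ℤ√13) = (ex18A : Matrix (Fin 2) (Fin 2) ℤ) := by
  ext i j
  fin_cases i <;> fin_cases j <;> rfl

theorem val_ex18A_zpow (m : ℤ) :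
    ((ex18A ^ m : (Matrix (Fin 2) (Fin 2) ℤ)ˣ) : Matrix (Fin 2) (Fin 2) ℤ) =
      toMatrix 13 ↑(fundamentalUnit13 ^ m) := by
  have hmap : Units.map (toMatrix 13 : ℤ√13 →* Matrix (Fin 2) (Fin 2) ℤ) fundamentalUnit13 =
      ex18A := Units.ext toMatrix_fundamentalUnit13
  rw [← hmap, ← map_zpow, Units.coe_map]
  rfl

end Zsqrtd

/-- For `A = !![18, 5; 65, 18]`, every `B ∈ GL(2, ℤ)` commuting with `A` is of the form
`B = ε·A^m` with `m ∈ ℤ` and `ε = ±1`; that is, `C(A) = ⟨A⟩ × ⟨−I⟩`. -/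
theorem centralizer_ex18 (B : Matrix (Fin 2) (Fin 2) ℤ)
    (hdet : B.det = 1 ∨ B.det = -1)
    (hcomm : (ex18A : Matrix (Fin 2) (Fin 2) ℤ) * B
      = B * (ex18A : Matrix (Fin 2) (Fin 2) ℤ)) :
    ∃ (m : ℤ) (ε : ℤ), (ε = 1 ∨ ε = -1) ∧
      B = ε • ((ex18A ^ m : (Matrix (Fin 2) (Fin 2) ℤ)ˣ) : Matrix (Fin 2) (Fin 2) ℤ) := by
  have hB : B = Zsqrtd.toMatrix 13 ⟨B 0 0, B 0 1⟩ := by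
    refine Zsqrtd.eq_toMatrix_of_commute (z := Zsqrtd.fundamentalUnit13) (by decide) ?_
    rwa [Zsqrtd.toMatrix_fundamentalUnit13]
  obtain ⟨u, hu⟩ : IsUnit (⟨B 0 0, B 0 1⟩ : ℤ√13) :=
    (Zsqrtd.isUnit_iff_norm_eq_one_or_eq_neg_one _).mpr (by rwa [← Zsqrtd.det_toMatrix, ← hB])
  obtain ⟨m, hm | hm⟩ := Zsqrtd.exists_zpow_eq u
  · exact ⟨m, 1, Or.inl rfl, by rw [one_smul, hB, ← hu, hm, Zsqrtd.val_ex18A_zpow]⟩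
  · refine ⟨m, -1, Or.inr rfl, ?_⟩
    rw [neg_one_smul, hB, ← hu, hm, Zsqrtd.val_ex18A_zpow, Units.val_neg, map_neg]
end

section
/- Let A be the 2×2 integer matrix with rows (2, 5) and (5, 12) (with characteristic polynomial x² − 14x − 1), and let R be the 2×2 integer matrix with rows (0, 1) and (1, 2). Then R³ = A, and every 2×2 integer matrix B with det B = ±1 and AB = BA is of the form B = ε·R^m for some integer m and some ε ∈ {1, −1}; that is, C(A) = ⟨R⟩ × ⟨−I⟩, which strictly contains ⟨A⟩ × ⟨−I⟩. -/
open Matrix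

/-- The matrix `A = !![2, 5; 5, 12]` (with characteristic polynomial `x² − 14x − 1`) as an
element of `GL(2, ℤ)`, i.e. a unit of the ring of `2 × 2` integer matrices. -/
def ex19A : (Matrix (Fin 2) (Fin 2) ℤ)ˣ :=
  ⟨!![2, 5; 5, 12], !![-12, 5; 5, -2], by decide, by decide⟩

/-- The matrix `R = !![0, 1; 1, 2]` as an element of `GL(2, ℤ)`. -/
def ex19R : (Matrix (Fin 2) (Fin 2) ℤ)ˣ :=
  ⟨!![0, 1; 1, 2], !![-2, 1; 1, 0], by decide, by decide⟩

/-!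
Writing `R = 1 + S`, we have `S² = 2`, so `x + y√2 ↦ x + yS` embeds `ℤ√2` into the integer
matrices; its image is exactly the centralizer of `A = R³`, and the determinant becomes the norm.
Hence `C(A)` is the unit group of `ℤ√2`, which Pell theory identifies as `±(1 + √2)^ℤ`: the
fundamental solution of `x² − 2y² = 1` is `3 + 2√2 = (1 + √2)²`, and `1 + √2` has norm `−1`.
The inclusion `⟨A⟩ × ⟨−I⟩ ⊂ C(A)` is strict because `A ≡ 2 (mod 5)`, so every `±A^m` has
off-diagonal entries divisible by `5`, while `R` does not.
-/

open Zsqrtd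

/-- The embedding `x + y√2 ↦ x + y(R − 1)` of `ℤ√2` into `2 × 2` integer matrices. -/
def zsqrtTwoToMatrix : ℤ√2 →+* Matrix (Fin 2) (Fin 2) ℤ where
  toFun z := !![z.re - z.im, z.im; z.im, z.re + z.im]
  map_one' := by ext i j; fin_cases i <;> fin_cases j <;> rfl
  map_mul' z w := by
    ext i j; fin_cases i <;> fin_cases j <;> simp [Matrix.mul_apply] <;> ring
  map_zero' := by ext i j; fin_cases i <;> fin_cases j <;> rfl
  map_add' z w := by ext i j; fin_cases i <;> fin_cases j <;> simp <;> ring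

theorem det_zsqrtTwoToMatrix (z : ℤ√2) : (zsqrtTwoToMatrix z).det = z.norm := by
  simp [zsqrtTwoToMatrix, det_fin_two_of, Zsqrtd.norm_def]
  ring

theorem exists_eq_zsqrtTwoToMatrix_of_commute_ex19A {B : Matrix (Fin 2) (Fin 2) ℤ}
    (h : (ex19A : Matrix (Fin 2) (Fin 2) ℤ) * B = B * ex19A) :
    ∃ z, B = zsqrtTwoToMatrix z := by
  have h01 := congrFun (congrFun h 0) 1
  have h10 := congrFun (congrFun h 1) 0
  simp [ex19A, Matrix.mul_apply, Fin.sum_univ_two] at h01 h10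
  refine ⟨⟨B 0 0 + B 0 1, B 0 1⟩, ?_⟩
  ext i j; fin_cases i <;> fin_cases j <;> simp [zsqrtTwoToMatrix] <;> linarith

def silverUnit : (ℤ√2)ˣ := ⟨⟨1, 1⟩, ⟨-1, 1⟩, by decide, by decide⟩

theorem zsqrtTwoToMatrix_silverUnit_zpow (m : ℤ) :
    zsqrtTwoToMatrix ↑(silverUnit ^ m) = ↑(ex19R ^ m) := by
  have hR : Units.map zsqrtTwoToMatrix.toMonoidHom silverUnit = ex19R := by
    ext i j; fin_cases i <;> fin_cases j <;> rfl
  rw [← hR, ← map_zpow]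
  rfl

theorem Pell.isFundamental_three_two :
    Pell.IsFundamental (Pell.Solution₁.mk 3 2 (by norm_num) : Pell.Solution₁ 2) := by
  refine ⟨by decide, by decide, fun {b} hb => ?_⟩
  by_contra! h
  have hb2 : b.x = 2 := by rw [Pell.Solution₁.x_mk] at h; omega
  have := b.prop
  rw [hb2] at this
  omega

theorem Zsqrtd.eq_silverUnit_zpow_of_norm_eq_one {z : ℤ√2} (hz : z.norm = 1) :
    ∃ m : ℤ, z = ↑(silverUnit ^ m) ∨ z = -↑(silverUnit ^ m) := by
  obtain ⟨n, hn⟩ := Pell.isFundamental_three_two.eq_zpow_or_neg_zpow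
    ⟨z, norm_eq_one_iff_mem_unitary.mp hz⟩
  have hsq : Unitary.toUnits (Pell.Solution₁.mk 3 2 (by norm_num) : Pell.Solution₁ 2) =
      silverUnit ^ (2 : ℤ) := by
    ext <;> rfl
  have hpow : ((Pell.Solution₁.mk 3 2 (by norm_num) ^ n : Pell.Solution₁ 2) : ℤ√2) =
      ↑(silverUnit ^ (2 * n)) := by
    rw [_root_.zpow_mul, ← hsq]
    exact congrArg Units.val (map_zpow (Unitary.toUnits : unitary (ℤ√2) →* (ℤ√2)ˣ) _ n)
  refine ⟨2 * n, ?_⟩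
  rcases hn with h | h
  · left; rw [← hpow, ← h]
  · right; rw [← hpow]; exact congrArg Subtype.val h

theorem Zsqrtd.eq_silverUnit_zpow_or_neg (u : (ℤ√2)ˣ) :
    ∃ m : ℤ, u = silverUnit ^ m ∨ u = -silverUnit ^ m := by
  have hnorm : (u : ℤ√2).norm = 1 ∨ (u : ℤ√2).norm = -1 :=
    Int.isUnit_iff.mp ((isUnit_iff_norm_isUnit _).mp u.isUnit)
  rcases hnorm with h | h
  · obtain ⟨m, hm⟩ := eq_silverUnit_zpow_of_norm_eq_one h
    exact ⟨m, hm.imp Units.ext Units.ext⟩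
  · have h' : ((u * silverUnit : (ℤ√2)ˣ) : ℤ√2).norm = 1 := by
      rw [Units.val_mul, norm_mul, h]
      rfl
    obtain ⟨m, hm⟩ := eq_silverUnit_zpow_of_norm_eq_one h'
    refine ⟨m - 1, ?_⟩
    rw [_root_.zpow_sub_one, ← mul_inv_cancel_right u silverUnit]
    rcases hm with hm | hm
    · left; rw [Units.ext hm]
    · right; rw [Units.ext (hm.trans (Units.val_neg _).symm), neg_mul]

theorem five_dvd_ex19A_zpow_zero_one (m : ℤ) :
    (5 : ℤ) ∣ ((ex19A ^ m : (Matrix (Fin 2) (Fin 2) ℤ)ˣ) : Matrix (Fin 2) (Fin 2) ℤ) 0 1 := by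
  induction m using Int.induction_on with
  | zero => simp
  | succ k ih =>
    rw [_root_.zpow_add_one]
    simp only [Units.val_mul, Matrix.mul_apply, Fin.sum_univ_two]
    exact dvd_add (dvd_mul_left 5 _) (dvd_mul_of_dvd_left ih _)
  | pred k ih =>
    rw [_root_.zpow_sub_one]
    simp only [Units.val_mul, Matrix.mul_apply, Fin.sum_univ_two]
    exact dvd_add (dvd_mul_left 5 _) (dvd_mul_of_dvd_left ih _)

/-- For `A = !![2, 5; 5, 12]` and `R = !![0, 1; 1, 2]`: `R³ = A`, every `B ∈ GL(2, ℤ)`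
commuting with `A` is of the form `B = ε·R^m` with `m ∈ ℤ` and `ε = ±1` (that is,
`C(A) = ⟨R⟩ × ⟨−I⟩`), and this strictly contains `⟨A⟩ × ⟨−I⟩`: some `B ∈ GL(2, ℤ)`
commuting with `A` is not of the form `ε·A^m`. -/
theorem centralizer_ex19 :
    (ex19R : Matrix (Fin 2) (Fin 2) ℤ) ^ 3 = (ex19A : Matrix (Fin 2) (Fin 2) ℤ) ∧
    (∀ B : Matrix (Fin 2) (Fin 2) ℤ, (B.det = 1 ∨ B.det = -1) →
      (ex19A : Matrix (Fin 2) (Fin 2) ℤ) * B = B * (ex19A : Matrix (Fin 2) (Fin 2) ℤ) →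
      ∃ (m : ℤ) (ε : ℤ), (ε = 1 ∨ ε = -1) ∧
        B = ε • ((ex19R ^ m : (Matrix (Fin 2) (Fin 2) ℤ)ˣ) : Matrix (Fin 2) (Fin 2) ℤ)) ∧
    (∃ B : Matrix (Fin 2) (Fin 2) ℤ, (B.det = 1 ∨ B.det = -1) ∧
      (ex19A : Matrix (Fin 2) (Fin 2) ℤ) * B = B * (ex19A : Matrix (Fin 2) (Fin 2) ℤ) ∧
      ∀ (m : ℤ) (ε : ℤ), (ε = 1 ∨ ε = -1) →
        B ≠ ε • ((ex19A ^ m : (Matrix (Fin 2) (Fin 2) ℤ)ˣ) : Matrix (Fin 2) (Fin 2) ℤ)) := by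
  refine ⟨by decide, fun B hdet hcomm => ?_, ⟨ex19R, Or.inr (by decide), by decide, ?_⟩⟩
  · obtain ⟨z, rfl⟩ := exists_eq_zsqrtTwoToMatrix_of_commute_ex19A hcomm
    rw [det_zsqrtTwoToMatrix] at hdet
    obtain ⟨u, rfl⟩ : IsUnit z := (isUnit_iff_norm_isUnit z).mpr (Int.isUnit_iff.mpr hdet)
    obtain ⟨m, rfl | rfl⟩ := eq_silverUnit_zpow_or_neg u
    · exact ⟨m, 1, Or.inl rfl, by rw [one_smul, zsqrtTwoToMatrix_silverUnit_zpow]⟩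
    · refine ⟨m, -1, Or.inr rfl, ?_⟩
      rw [Units.val_neg, map_neg, zsqrtTwoToMatrix_silverUnit_zpow, neg_one_smul]
  · intro m ε _ h
    have h01 := congrFun (congrFun h 0) 1
    have h5 := dvd_mul_of_dvd_right (five_dvd_ex19A_zpow_zero_one m) ε
    rw [← smul_eq_mul, ← Matrix.smul_apply, ← h01] at h5
    exact absurd h5 (by decide)
end
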